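/- arXiv:1905.12355 — 3 statements merged into one kernel-verified Lean document; each statement's English description precedes it below -/
import Mathlib

section
/- Let c ≥ 0 and let B have the Luria–Delbrück distribution with parameter c. Then lim_{m→∞} m·P[B ≥ m] = c. -/
open MeasureTheory ProbabilityTheory Filter Set
open scoped Topology Function

/-!
Write `Sₙ = Y₀ + ⋯ + Yₙ₋₁`. Conditioning on `K` gives
`m · P[B ≥ m] = ∑ₙ P[K = n] · m · P[Sₙ ≥ m]`, and since `P[Y ≥ j] = 1/j` each summand tends to
`P[K = n] · n`: a sum of `n` such heavy-tailed terms exceeds `m` essentially only when one of its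
terms does. From below, `P[Sₙ ≥ m] ≥ P[max Yₖ ≥ m] = 1 - (1 - 1/m)ⁿ`. From above, either some
`Yₖ ≥ m - √m`, or some `Yₖ ≥ m/n` together with another `Yₗ ≥ √m/n`, which by pairwise
independence costs only `n⁴/m^{3/2}`. Since some `Yₖ ≥ m/n` whenever `Sₙ ≥ m`,
`m · P[Sₙ ≥ m] ≤ n²`; as `E[K²] < ∞` this justifies dominated convergence, and `E[K] = c`.
-/

/-- The step distribution of the Luria–Delbrück distribution:
`P[Y = j] = 1/(j(j+1))` for integers `j ≥ 1`, and `P[Y = 0] = 0`. -/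
noncomputable def stepPMF (j : ℕ) : ℝ :=
  if 1 ≤ j then 1 / ((j : ℝ) * ((j : ℝ) + 1)) else 0

lemma sum_range_stepPMF {j : ℕ} (hj : 1 ≤ j) : ∑ i ∈ Finset.range j, stepPMF i = 1 - 1 / j := by
  induction j, hj using Nat.le_induction with
  | base => simp [stepPMF]
  | succ j hj ih =>
    have hj' : (0 : ℝ) < j := by exact_mod_cast hj
    rw [Finset.sum_range_succ, ih, stepPMF, if_pos hj]
    push_cast
    field_simp
    ring

section Tails

variable {Ω : Type*} [MeasurableSpace Ω] {P : Measure Ω}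

lemma measureReal_setOf_le_eq_one_div_of_stepPMF [IsProbabilityMeasure P] {X : Ω → ℕ}
    (hX : Measurable X) (hlaw : ∀ j, P {ω | X ω = j} = ENNReal.ofReal (stepPMF j)) {j : ℕ}
    (hj : 1 ≤ j) :
    P.real {ω | j ≤ X ω} = 1 / j := by
  have hlt : {ω | X ω < j} = ⋃ i ∈ Finset.range j, {ω | X ω = i} := by ext; simp
  have hPlt : P.real {ω | X ω < j} = 1 - 1 / j := by
    rw [hlt, measureReal_biUnion_finset (f := fun i => {ω | X ω = i})
      (fun i _ i' _ h => Set.disjoint_left.mpr fun ω h1 h2 => h (h1.symm.trans h2))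
      (fun i _ => hX (measurableSet_singleton i)), ← sum_range_stepPMF hj]
    refine Finset.sum_congr rfl fun i _ => ?_
    rw [measureReal_def, hlaw, ENNReal.toReal_ofReal]
    unfold stepPMF; split_ifs <;> positivity
  have hcompl : {ω | j ≤ X ω} = {ω | X ω < j}ᶜ := by ext; simp
  rw [hcompl, probReal_compl_eq_one_sub (measurableSet_lt hX measurable_const), hPlt]
  ring

lemma measureReal_setOf_real_le_le_one_div {X : Ω → ℕ}
    (htail : ∀ j : ℕ, 1 ≤ j → P.real {ω | j ≤ X ω} = 1 / j) {x : ℝ} (hx : 0 < x) :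
    P.real {ω | x ≤ X ω} ≤ 1 / x := by
  have hceil : 1 ≤ ⌈x⌉₊ := Nat.one_le_iff_ne_zero.mpr (Nat.ceil_pos.mpr hx).ne'
  have hset : {ω | x ≤ X ω} = {ω | ⌈x⌉₊ ≤ X ω} := by ext; simp [Nat.ceil_le]
  rw [hset, htail _ hceil]
  gcongr
  exact Nat.le_ceil x

lemma measureReal_biUnion_setOf_le_le_card_div
    {Y : ℕ → Ω → ℕ} (htail : ∀ k, ∀ j : ℕ, 1 ≤ j → P.real {ω | j ≤ Y k ω} = 1 / j)
    (s : Finset ℕ) {x : ℝ} (hx : 0 < x) : P.real (⋃ k ∈ s, {ω | x ≤ Y k ω}) ≤ s.card / x :=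
  calc P.real (⋃ k ∈ s, {ω | x ≤ Y k ω})
      ≤ ∑ k ∈ s, P.real {ω | x ≤ Y k ω} := measureReal_biUnion_finset_le _ _
    _ ≤ ∑ _k ∈ s, 1 / x :=
        Finset.sum_le_sum fun k _ => measureReal_setOf_real_le_le_one_div (htail k) hx
    _ = s.card / x := by rw [Finset.sum_const, nsmul_eq_mul, mul_one_div]

lemma measureReal_biUnion_pair_le_card_sq_div {Y : ℕ → Ω → ℕ}
    (hpair : Pairwise fun k l => IndepFun (Y k) (Y l) P)
    (htail : ∀ k, ∀ j : ℕ, 1 ≤ j → P.real {ω | j ≤ Y k ω} = 1 / j) (s : Finset ℕ) {x x' : ℝ}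
    (hx : 0 < x) (hx' : 0 < x') :
    P.real (⋃ k ∈ s, ⋃ l ∈ s.erase k, {ω | x ≤ Y k ω} ∩ {ω | x' ≤ Y l ω})
      ≤ s.card ^ 2 / (x * x') := by
  have hpairs : ∀ k ∈ s, ∀ l ∈ s.erase k,
      P.real ({ω | x ≤ Y k ω} ∩ {ω | x' ≤ Y l ω}) ≤ 1 / (x * x') := by
    intro k _ l hl
    have hind := (hpair (Finset.ne_of_mem_erase hl).symm).measure_inter_preimage_eq_mul
      {y : ℕ | x ≤ y} {y : ℕ | x' ≤ y} .of_discrete .of_discrete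
    calc P.real ({ω | x ≤ Y k ω} ∩ {ω | x' ≤ Y l ω})
        = P.real {ω | x ≤ Y k ω} * P.real {ω | x' ≤ Y l ω} := by
          rw [measureReal_def, measureReal_def, measureReal_def, ← ENNReal.toReal_mul]
          exact congrArg ENNReal.toReal hind
      _ ≤ 1 / x * (1 / x') := by
          gcongr
          exacts [measureReal_setOf_real_le_le_one_div (htail k) hx,
            measureReal_setOf_real_le_le_one_div (htail l) hx']
      _ = 1 / (x * x') := one_div_mul_one_div x x'
  calc _ ≤ ∑ k ∈ s, ∑ l ∈ s.erase k, P.real ({ω | x ≤ Y k ω} ∩ {ω | x' ≤ Y l ω}) :=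
        (measureReal_biUnion_finset_le _ _).trans
          (Finset.sum_le_sum fun k _ => measureReal_biUnion_finset_le _ _)
    _ ≤ ∑ _k ∈ s, ∑ _l ∈ s, 1 / (x * x') := by
        refine Finset.sum_le_sum fun k hk => (Finset.sum_le_sum (hpairs k hk)).trans ?_
        exact Finset.sum_le_sum_of_subset_of_nonneg (Finset.erase_subset _ _)
          fun _ _ _ => by positivity
    _ = s.card ^ 2 / (x * x') := by
        rw [Finset.sum_const, Finset.sum_const, smul_smul, nsmul_eq_mul, Nat.cast_mul, sq,
          mul_one_div]

end Tails

section Deterministic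

variable {ι : Type*} {s : Finset ι} {y : ι → ℝ} {m : ℝ}

lemma exists_div_card_le_of_le_sum (hm : 0 < m) (h : m ≤ ∑ k ∈ s, y k) :
    ∃ k ∈ s, m / s.card ≤ y k := by
  have hs : s.Nonempty := Finset.nonempty_of_sum_ne_zero (f := y) (by linarith)
  refine Finset.exists_le_of_sum_le hs ?_
  rw [Finset.sum_const, nsmul_eq_mul, mul_div_cancel₀ _ (by exact_mod_cast hs.card_pos.ne')]
  exact h

lemma exists_sub_le_or_exists_two_le_of_le_sum [DecidableEq ι] {δ : ℝ} (hδ : 0 ≤ δ) (hm : 0 < m)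
    (h : m ≤ ∑ k ∈ s, y k) :
    (∃ k ∈ s, m - δ ≤ y k) ∨
      ∃ k ∈ s, ∃ l ∈ s.erase k, m / s.card ≤ y k ∧ δ / s.card ≤ y l := by
  obtain ⟨k, hk, hky⟩ := exists_div_card_le_of_le_sum hm h
  by_cases hbig : m - δ ≤ y k
  · exact .inl ⟨k, hk, hbig⟩
  refine .inr ⟨k, hk, ?_⟩
  have hrest : ∑ _l ∈ s.erase k, δ / s.card < ∑ l ∈ s.erase k, y l := by
    rw [Finset.sum_const, nsmul_eq_mul, Finset.card_erase_of_mem hk, Finset.sum_erase_eq_sub hk]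
    have : ((s.card - 1 : ℕ) : ℝ) * (δ / s.card) ≤ δ := by
      rcases Nat.eq_zero_or_pos s.card with h0 | hpos
      · simpa [h0] using hδ
      · rw [Nat.cast_sub hpos, Nat.cast_one, mul_div_assoc', div_le_iff₀ (by exact_mod_cast hpos)]
        nlinarith
    linarith
  obtain ⟨l, hl, hly⟩ := Finset.exists_lt_of_sum_lt hrest
  exact ⟨l, hl, hky, hly.le⟩

end Deterministic

section PartialSums

variable {Ω : Type*} [MeasurableSpace Ω] {P : Measure Ω} [IsProbabilityMeasure P]
  {Y : ℕ → Ω → ℕ}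

lemma mul_measureReal_le_sum_range_le_sq
    (htail : ∀ k, ∀ j : ℕ, 1 ≤ j → P.real {ω | j ≤ Y k ω} = 1 / j) (n m : ℕ) :
    m * P.real {ω | m ≤ ∑ k ∈ Finset.range n, Y k ω} ≤ n ^ 2 := by
  rcases Nat.eq_zero_or_pos m with rfl | hm
  · simp
  have hm' : (0 : ℝ) < m := by exact_mod_cast hm
  rcases Nat.eq_zero_or_pos n with rfl | hn
  · simp [hm.ne']
  have hn' : (0 : ℝ) < n := by exact_mod_cast hn
  have hsub : {ω | m ≤ ∑ k ∈ Finset.range n, Y k ω} ⊆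
      ⋃ k ∈ Finset.range n, {ω | (m / n : ℝ) ≤ Y k ω} := by
    intro ω hω
    have hsum : (m : ℝ) ≤ ∑ k ∈ Finset.range n, (Y k ω : ℝ) := by exact_mod_cast hω
    obtain ⟨k, hk, hky⟩ := exists_div_card_le_of_le_sum hm' hsum
    rw [Finset.card_range] at hky
    exact Set.mem_biUnion hk hky
  calc m * P.real {ω | m ≤ ∑ k ∈ Finset.range n, Y k ω}
      ≤ m * (n / (m / n)) := by
        gcongr
        refine (measureReal_mono hsub (measure_ne_top _ _)).trans ?_
        simpa using measureReal_biUnion_setOf_le_le_card_div htail (Finset.range n) (by positivity)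
    _ = n ^ 2 := by field_simp

lemma mul_measureReal_le_sum_range_le_of_pairwise_indepFun
    (hpair : Pairwise fun k l => IndepFun (Y k) (Y l) P)
    (htail : ∀ k, ∀ j : ℕ, 1 ≤ j → P.real {ω | j ≤ Y k ω} = 1 / j) (n : ℕ) {m : ℕ} {ε : ℝ}
    (hm : 0 < m) (hε0 : 0 < ε) (hε1 : ε < 1) :
    m * P.real {ω | m ≤ ∑ k ∈ Finset.range n, Y k ω} ≤ n / (1 - ε) + n ^ 4 / (ε * m) := by
  rcases Nat.eq_zero_or_pos n with rfl | hn
  · simp [hm.ne']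
  have hm' : (0 : ℝ) < m := by exact_mod_cast hm
  have hn' : (0 : ℝ) < n := by exact_mod_cast hn
  set U₁ := ⋃ k ∈ Finset.range n, {ω | (1 - ε) * m ≤ Y k ω}
  set U₂ := ⋃ k ∈ Finset.range n, ⋃ l ∈ (Finset.range n).erase k,
    {ω | (m / n : ℝ) ≤ Y k ω} ∩ {ω | (ε * m / n : ℝ) ≤ Y l ω}
  have hsub : {ω | m ≤ ∑ k ∈ Finset.range n, Y k ω} ⊆ U₁ ∪ U₂ := by
    intro ω hω
    have hsum : (m : ℝ) ≤ ∑ k ∈ Finset.range n, (Y k ω : ℝ) := by exact_mod_cast hω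
    rcases exists_sub_le_or_exists_two_le_of_le_sum (by positivity : 0 ≤ ε * m) hm' hsum with
      ⟨k, hk, hky⟩ | ⟨k, hk, l, hl, hky, hly⟩
    · refine .inl (Set.mem_biUnion hk ?_)
      change (1 - ε) * m ≤ (Y k ω : ℝ)
      linarith
    · rw [Finset.card_range] at hky hly
      exact .inr (Set.mem_biUnion hk (Set.mem_biUnion hl ⟨hky, hly⟩))
  have hU₁ : P.real U₁ ≤ n / ((1 - ε) * m) := by
    have := measureReal_biUnion_setOf_le_le_card_div htail (Finset.range n)
      (mul_pos (by linarith : (0 : ℝ) < 1 - ε) hm')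
    rwa [Finset.card_range] at this
  have hU₂ : P.real U₂ ≤ n ^ 2 / (m / n * (ε * m / n)) := by
    have := measureReal_biUnion_pair_le_card_sq_div hpair htail (Finset.range n)
      (by positivity : (0 : ℝ) < m / n) (by positivity : 0 < ε * m / n)
    rwa [Finset.card_range] at this
  calc m * P.real {ω | m ≤ ∑ k ∈ Finset.range n, Y k ω}
      ≤ m * (n / ((1 - ε) * m) + n ^ 2 / (m / n * (ε * m / n))) := by
        gcongr
        calc P.real {ω | m ≤ ∑ k ∈ Finset.range n, Y k ω}
            ≤ P.real (U₁ ∪ U₂) := measureReal_mono hsub (measure_ne_top _ _)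
          _ ≤ P.real U₁ + P.real U₂ := measureReal_union_le _ _
          _ ≤ _ := add_le_add hU₁ hU₂
    _ = n / (1 - ε) + n ^ 4 / (ε * m) := by
        have : 1 - ε ≠ 0 := by linarith
        field_simp

lemma one_sub_pow_le_measureReal_le_sum_range (hY : ∀ k, Measurable (Y k)) (hind : iIndepFun Y P)
    (htail : ∀ k, ∀ j : ℕ, 1 ≤ j → P.real {ω | j ≤ Y k ω} = 1 / j) (n : ℕ) {m : ℕ}
    (hm : 1 ≤ m) :
    1 - (1 - 1 / m) ^ n ≤ P.real {ω | m ≤ ∑ k ∈ Finset.range n, Y k ω} := by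
  have hsmall : ∀ k, P.real {ω | Y k ω < m} = 1 - 1 / m := by
    intro k
    have hcompl : {ω | Y k ω < m} = {ω | m ≤ Y k ω}ᶜ := by ext; simp
    rw [hcompl, probReal_compl_eq_one_sub (measurableSet_le measurable_const (hY k)),
      htail k m hm]
  have hall : P.real (⋂ k ∈ Finset.range n, {ω | Y k ω < m}) = (1 - 1 / m) ^ n := by
    have := hind.measure_inter_preimage_eq_mul (Finset.range n)
      (sets := fun _ => Set.Iio m) fun _ _ => .of_discrete
    rw [measureReal_def]
    simp only [Set.preimage, Set.mem_Iio] at this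
    rw [this, ENNReal.toReal_prod]
    simp only [← measureReal_def, hsmall, Finset.prod_const, Finset.card_range]
  have hsub : (⋂ k ∈ Finset.range n, {ω | Y k ω < m})ᶜ ⊆
      {ω | m ≤ ∑ k ∈ Finset.range n, Y k ω} := by
    intro ω hω
    simp only [Set.mem_compl_iff, Set.mem_iInter, not_forall] at hω
    obtain ⟨k, hk, hmk⟩ := hω
    exact (not_lt.mp hmk).trans (Finset.single_le_sum (fun _ _ => Nat.zero_le _) hk)
  have hmeas : MeasurableSet (⋂ k ∈ Finset.range n, {ω | Y k ω < m}) :=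
    .biInter (Set.to_countable _) fun k _ => measurableSet_lt (hY k) measurable_const
  rw [← hall, ← probReal_compl_eq_one_sub hmeas]
  exact measureReal_mono hsub (measure_ne_top _ _)

lemma tendsto_mul_measureReal_le_sum_range (hY : ∀ k, Measurable (Y k)) (hind : iIndepFun Y P)
    (htail : ∀ k, ∀ j : ℕ, 1 ≤ j → P.real {ω | j ≤ Y k ω} = 1 / j) (n : ℕ) :
    Tendsto (fun m : ℕ => m * P.real {ω | m ≤ ∑ k ∈ Finset.range n, Y k ω}) atTop (𝓝 n) := by
  have hlower : Tendsto (fun m : ℕ => ∑ i ∈ Finset.range n, (1 - 1 / (m : ℝ)) ^ i)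
      atTop (𝓝 n) := by
    have h := tendsto_finsetSum (Finset.range n) fun i _ =>
      (tendsto_const_nhds (x := (1 : ℝ)).sub tendsto_one_div_atTop_nhds_zero_nat).pow i
    simpa using h
  set ε : ℕ → ℝ := fun m => (√(m : ℝ))⁻¹
  have hε : Tendsto ε atTop (𝓝 0) :=
    tendsto_inv_atTop_zero.comp (Real.tendsto_sqrt_atTop.comp tendsto_natCast_atTop_atTop)
  have hupper : Tendsto (fun m => (n : ℝ) / (1 - ε m) + n ^ 4 * ε m) atTop (𝓝 (n : ℝ)) := by
    have h := (((tendsto_const_nhds.sub hε).inv₀ (by norm_num : (1 : ℝ) - 0 ≠ 0)).const_mul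
      (n : ℝ)).add (hε.const_mul ((n : ℝ) ^ 4))
    simpa [div_eq_mul_inv] using h
  refine tendsto_of_tendsto_of_tendsto_of_le_of_le' hlower hupper ?_ ?_
  · filter_upwards [eventually_ge_atTop 1] with m hm
    have hm' : (m : ℝ) ≠ 0 := by positivity
    calc ∑ i ∈ Finset.range n, (1 - 1 / (m : ℝ)) ^ i
        = m * (1 - (1 - 1 / m) ^ n) := by
          rw [← mul_neg_geom_sum, sub_sub_cancel, ← mul_assoc, mul_one_div_cancel hm', one_mul]
      _ ≤ _ := by gcongr; exact one_sub_pow_le_measureReal_le_sum_range hY hind htail n hm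
  · filter_upwards [eventually_ge_atTop 2] with m hm
    have hsqrt : 1 < √(m : ℝ) := by
      rw [Real.lt_sqrt zero_le_one]
      exact_mod_cast hm
    have hε0 : 0 < ε m := by positivity
    have hε1 : ε m < 1 := inv_lt_one_of_one_lt₀ hsqrt
    have hεm : n ^ 4 / (ε m * m) = n ^ 4 * ε m := by
      rw [show ε m * m = √(m : ℝ) from (inv_mul_eq_div _ _).trans (Real.div_sqrt), div_eq_mul_inv]
    calc _ ≤ n / (1 - ε m) + n ^ 4 / (ε m * m) :=
          mul_measureReal_le_sum_range_le_of_pairwise_indepFun (fun k l hkl => hind.indepFun hkl)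
            htail n (by omega) hε0 hε1
      _ = _ := by rw [hεm]

end PartialSums

lemma measureReal_comp_mem_eq_tsum {Ω β : Type*} [MeasurableSpace Ω] [MeasurableSpace β]
    {P : Measure Ω} [IsFiniteMeasure P] {K : Ω → ℕ} {S : ℕ → Ω → β} (hK : Measurable K)
    (hS : ∀ n, Measurable (S n)) (hind : ∀ n, IndepFun K (S n) P) {A : Set β}
    (hA : MeasurableSet A) :
    P.real {ω | S (K ω) ω ∈ A} = ∑' n, P.real {ω | K ω = n} * P.real {ω | S n ω ∈ A} := by
  have hset : {ω | S (K ω) ω ∈ A} = ⋃ n, {ω | K ω = n} ∩ {ω | S n ω ∈ A} := by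
    ext ω; simp
  have hdisj : Pairwise (Disjoint on fun n => {ω | K ω = n} ∩ {ω | S n ω ∈ A}) :=
    fun n n' hne => Set.disjoint_left.mpr fun ω h h' => hne (h.1.symm.trans h'.1)
  rw [measureReal_def, hset,
    measure_iUnion hdisj fun n => (hK (measurableSet_singleton n)).inter (hS n hA),
    ENNReal.tsum_toReal_eq fun _ => measure_ne_top _ _]
  refine tsum_congr fun n => ?_
  rw [measureReal_def, measureReal_def, ← ENNReal.toReal_mul]
  exact congrArg ENNReal.toReal
    ((hind n).measure_inter_preimage_eq_mul _ _ (measurableSet_singleton n) hA)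

lemma hasSum_poisson_mul_self (c : ℝ) :
    HasSum (fun n : ℕ => Real.exp (-c) * c ^ n / n.factorial * n) c := by
  have hexp : HasSum (fun n : ℕ => Real.exp (-c) * c ^ n / n.factorial) 1 := by
    have := (NormedSpace.expSeries_div_hasSum_exp c).mul_left (Real.exp (-c))
    rw [← Real.exp_eq_exp_ℝ, ← Real.exp_add, neg_add_cancel, Real.exp_zero] at this
    simpa only [mul_div_assoc] using this
  have hshift : ∀ n : ℕ, Real.exp (-c) * c ^ (n + 1) / (n + 1).factorial * ((n + 1 : ℕ) : ℝ)
      = c * (Real.exp (-c) * c ^ n / n.factorial) := by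
    intro n
    rw [Nat.factorial_succ]
    push_cast
    field_simp
    ring
  rw [← hasSum_nat_add_iff' 1]
  simpa only [hshift, Finset.range_one, Finset.sum_singleton, Nat.cast_zero, mul_zero, sub_zero,
    mul_one] using hexp.mul_left c

lemma summable_poisson_mul_sq {c : ℝ} (hc : 0 ≤ c) :
    Summable (fun n : ℕ => Real.exp (-c) * c ^ n / n.factorial * n ^ 2) := by
  refine .of_nonneg_of_le (fun n => by positivity) (fun n => ?_)
    ((Real.summable_pow_div_factorial (4 * c)).mul_left (Real.exp (-c)))
  have hsq : (n : ℝ) ^ 2 ≤ 4 ^ n := by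
    have : (n : ℝ) < 2 ^ n := by exact_mod_cast Nat.lt_two_pow_self
    calc (n : ℝ) ^ 2 ≤ (2 ^ n) ^ 2 := by gcongr
      _ = 4 ^ n := by rw [← pow_mul, mul_comm, pow_mul]; norm_num
  calc Real.exp (-c) * c ^ n / n.factorial * n ^ 2
      = Real.exp (-c) * (c ^ n * n ^ 2 / n.factorial) := by ring
    _ ≤ Real.exp (-c) * (c ^ n * 4 ^ n / n.factorial) := by gcongr
    _ = Real.exp (-c) * ((4 * c) ^ n / n.factorial) := by ring

/-- Let `c ≥ 0` and let `B = Σ_{k=1}^K Y_k` have the Luria–Delbrück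
distribution with parameter `c`, where `K` is Poisson(`c`), the `Y k` are i.i.d. with
`P[Y = j] = 1/(j(j+1))` for `j ≥ 1`, and `K, Y_1, Y_2, …` are independent.  Then
`lim_{m→∞} m · P[B ≥ m] = c`. -/
theorem luria_delbruck_tail
    (c : ℝ) (hc : 0 ≤ c)
    (Ω : Type) [MeasurableSpace Ω] (P : Measure Ω) [IsProbabilityMeasure P]
    (K : Ω → ℕ) (Y : ℕ → Ω → ℕ) (B : Ω → ℕ)
    (hKmeas : Measurable K) (hYmeas : ∀ k, Measurable (Y k))
    (hKlaw : ∀ m : ℕ,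
      P {ω | K ω = m} = ENNReal.ofReal (Real.exp (-c) * c ^ m / m.factorial))
    (hYlaw : ∀ k j, P {ω | Y k ω = j} = ENNReal.ofReal (stepPMF j))
    (hIndep : iIndepFun
      (fun i : Option ℕ => Option.elim i K Y) P)
    (hB : ∀ ω, B ω = ∑ k ∈ Finset.range (K ω), Y k ω) :
    Filter.Tendsto (fun m : ℕ => (m : ℝ) * (P {ω | m ≤ B ω}).toReal)
      Filter.atTop (nhds c) := by
  obtain rfl : B = fun ω => ∑ k ∈ Finset.range (K ω), Y k ω := funext hB
  set π : ℕ → ℝ := fun n => Real.exp (-c) * c ^ n / n.factorial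
  have hπ : ∀ n, 0 ≤ π n := fun n => by positivity
  have htail k j (hj : 1 ≤ j) := measureReal_setOf_le_eq_one_div_of_stepPMF (hYmeas k) (hYlaw k) hj
  have hKS : ∀ n, IndepFun K (fun ω => ∑ k ∈ Finset.range n, Y k ω) P := fun n => by
    have h := hIndep.indepFun_finsetSum_of_notMem (s := (Finset.range n).map .some)
      (i := none) (by rintro (_ | k); exacts [hKmeas, hYmeas k]) (by simp)
    simpa [Finset.sum_fn] using h.symm
  have hYind : iIndepFun Y P := hIndep.precomp (g := Option.some) (Option.some_injective ℕ)
  have hdecomp : ∀ m : ℕ, (m : ℝ) * (P {ω | m ≤ ∑ k ∈ Finset.range (K ω), Y k ω}).toReal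
      = ∑' n, π n * (m * P.real {ω | m ≤ ∑ k ∈ Finset.range n, Y k ω}) := fun m => by
    have h := measureReal_comp_mem_eq_tsum (A := Set.Ici m) hKmeas (fun n => by fun_prop) hKS
      measurableSet_Ici
    simp only [Set.mem_Ici] at h
    rw [← measureReal_def, h, ← tsum_mul_left]
    refine tsum_congr fun n => ?_
    rw [measureReal_def, hKlaw, ENNReal.toReal_ofReal (hπ n)]
    ring
  simp_rw [hdecomp]
  rw [← (hasSum_poisson_mul_self c).tsum_eq]
  refine tendsto_tsum_of_dominated_convergence (summable_poisson_mul_sq hc)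
    (fun n => ((tendsto_mul_measureReal_le_sum_range hYmeas hYind htail n).const_mul (π n)))
    (.of_forall fun m n => ?_)
  rw [Real.norm_of_nonneg (mul_nonneg (hπ n) (by positivity))]
  exact mul_le_mul_of_nonneg_left (mul_measureReal_le_sum_range_le_sq htail n m) (hπ n)
end

section
/- Fix an integer r ≥ 2 and a ∈ (0,1), let θ ∈ [0,∞), and let (μ_n)_{n≥1} ⊂ (0,1) satisfy n·μ_n → θ. For each n ≥ r, let (B^{(n)}_s)_{s≥r} be the single-site mutation chain with mutation rate μ_n started from B^{(n)}_r = 1 at population size r, and let (B̂^{(n)}_s)_{s≥r} be the mutant-descendant chain with mutation rate μ_n started from B̂^{(n)}_r = 1 at population size r. Then, as n → ∞, P[B^{(n)}_n > a·n] → (1−a)^{r−1} and P[B̂^{(n)}_n > a·n] → (1−a)^{r−1}. -/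
open MeasureTheory ProbabilityTheory Filter Set

/-- Transition probabilities of the single-site mutation chain with mutation rate `μ`. -/
noncomputable def singleSiteTrans (μ : ℝ) (r j k : ℕ) : ℝ :=
  if j = k + 1 then ((j : ℝ) / r) * (μ / 3) ^ 2
  else if k = j then
    ((j : ℝ) / r) * (2 * (μ / 3) * (1 - μ / 3)) + (((r : ℝ) - j) / r) * (1 - μ) ^ 2
  else if k = j + 1 then
    ((j : ℝ) / r) * (1 - μ / 3) ^ 2 + (((r : ℝ) - j) / r) * (2 * μ * (1 - μ))
  else if k = j + 2 then (((r : ℝ) - j) / r) * μ ^ 2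
  else 0

/-- Transition probabilities of the mutant-descendant chain with mutation rate `μ`. -/
noncomputable def hatTrans (μ : ℝ) (r j k : ℕ) : ℝ :=
  if k = j then (((r : ℝ) - j) / r) * (1 - μ) ^ 2
  else if k = j + 1 then (j : ℝ) / r + (((r : ℝ) - j) / r) * (2 * μ * (1 - μ))
  else if k = j + 2 then (((r : ℝ) - j) / r) * μ ^ 2
  else 0

/-- `IsMC P q r₀ j₀ B` says that `(B r)_{r ≥ r₀}` is, under the probability measure `P`,
a Markov chain with transition probabilities `q` started from state `j₀` at time `r₀`. -/
def IsMC {Ω : Type*} [MeasurableSpace Ω] (P : Measure Ω)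
    (q : ℕ → ℕ → ℕ → ℝ) (r₀ j₀ : ℕ) (B : ℕ → Ω → ℕ) : Prop :=
  (∀ s, Measurable (B s)) ∧
  P {ω | B r₀ ω = j₀} = 1 ∧
  ∀ r, r₀ ≤ r → ∀ f : ℕ → ℕ,
    (P {ω | ∀ s, r₀ ≤ s → s ≤ r + 1 → B s ω = f s}).toReal
      = (P {ω | ∀ s, r₀ ≤ s → s ≤ r → B s ω = f s}).toReal * q r (f r) (f (r + 1))

/-!
Write `U_t = t - B_t` for the number of individuals without the mutation. When `μ = 0` both
chains move `U` like a Pólya urn, whose rising factorial moments obey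
`E[U_{t+1}^{(M)} | U_t] = (t + M) / t · U_t^{(M)}`; so `E[U_t^{(M)}] / t^{(M)}` stays equal to its
initial value `(r - 1)^{(M)} / r^{(M)} = (r - 1) / (r - 1 + M)`. Mutation perturbs one step of
this normalised moment by `O(μ / t)`, so up to time `n` it drifts by `O(μ_n log n) → 0`.
Hence the moments of `1 - B_n / n` converge to those of the Beta(r - 1, 1) law. A law on
`[0, 1]` is determined by its moments: Weierstrass approximation turns moment convergence
into convergence against continuous test functions, and continuous ramps squeezing the
indicator of `[0, 1 - a)` give `P[B_n > a n] → (1 - a)^(r - 1)`.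
-/

open Finset

lemma abs_sum_mul_sub_sum_mul_le {ι : Type*} {s : Finset ι} {w a b : ι → ℝ} {E : ℝ}
    (hw : ∀ k ∈ s, 0 ≤ w k) (hw₁ : ∑ k ∈ s, w k = 1) (hab : ∀ k ∈ s, |a k - b k| ≤ E) :
    |∑ k ∈ s, w k * a k - ∑ k ∈ s, w k * b k| ≤ E := by
  rw [← sum_sub_distrib]
  calc |∑ k ∈ s, (w k * a k - w k * b k)| ≤ ∑ k ∈ s, w k * E := by
        refine (abs_sum_le_sum_abs _ _).trans (sum_le_sum fun k hk => ?_)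
        rw [← mul_sub, abs_mul, abs_of_nonneg (hw k hk)]
        exact mul_le_mul_of_nonneg_left (hab k hk) (hw k hk)
    _ = E := by rw [← sum_mul, hw₁, one_mul]

/-! ### The two kernels as perturbed Pólya urns -/

/-- Both kernels are mixtures, with weights `j / t` and `(t - j) / t`, of shifted
Binomial(2, ν) laws; this is the mean of `f(X)` for `X ~ Binomial(2, ν)` and `f(i) = xᵢ`. -/
noncomputable def binom2Mean (ν x₀ x₁ x₂ : ℝ) : ℝ :=
  (1 - ν) ^ 2 * x₀ + 2 * ν * (1 - ν) * x₁ + ν ^ 2 * x₂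

lemma binom2Mean_self (ν x : ℝ) : binom2Mean ν x x x = x := by
  unfold binom2Mean; ring

lemma abs_binom2Mean_sub_le {ν x₀ x₁ x₂ D : ℝ} (hν₀ : 0 ≤ ν) (hν₁ : ν ≤ 1)
    (h₁ : |x₁ - x₀| ≤ D) (h₂ : |x₂ - x₁| ≤ D) :
    |binom2Mean ν x₀ x₁ x₂ - x₀| ≤ 2 * ν * D := by
  have hsplit : binom2Mean ν x₀ x₁ x₂ - x₀ = (2 * ν - ν ^ 2) * (x₁ - x₀) + ν ^ 2 * (x₂ - x₁) := by
    unfold binom2Mean; ring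
  have hc : 0 ≤ 2 * ν - ν ^ 2 := by nlinarith
  calc |binom2Mean ν x₀ x₁ x₂ - x₀|
      ≤ (2 * ν - ν ^ 2) * |x₁ - x₀| + ν ^ 2 * |x₂ - x₁| := by
        rw [hsplit]
        refine (abs_add_le _ _).trans_eq ?_
        rw [abs_mul, abs_mul, abs_of_nonneg hc, abs_of_nonneg (sq_nonneg ν)]
    _ ≤ (2 * ν - ν ^ 2) * D + ν ^ 2 * D := by gcongr
    _ = 2 * ν * D := by ring

lemma singleSiteTrans_eq (μ : ℝ) (t j k : ℕ) :
    singleSiteTrans μ t j k =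
      (if k = j - 1 then (j / t : ℝ) * (μ / 3) ^ 2 else 0)
      + (if k = j then (j / t : ℝ) * (2 * (μ / 3) * (1 - μ / 3)) + ((t - j) / t) * (1 - μ) ^ 2
          else 0)
      + (if k = j + 1 then (j / t : ℝ) * (1 - μ / 3) ^ 2 + ((t - j) / t) * (2 * μ * (1 - μ))
          else 0)
      + (if k = j + 2 then ((t - j) / t : ℝ) * μ ^ 2 else 0) := by
  unfold singleSiteTrans
  rcases j with _ | j <;> split_ifs <;> first | omega | simp_all

lemma hatTrans_eq (μ : ℝ) (t j k : ℕ) :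
    hatTrans μ t j k =
      (if k = j then ((t - j) / t : ℝ) * (1 - μ) ^ 2 else 0)
      + (if k = j + 1 then (j / t : ℝ) + ((t - j) / t) * (2 * μ * (1 - μ)) else 0)
      + (if k = j + 2 then ((t - j) / t : ℝ) * μ ^ 2 else 0) := by
  unfold hatTrans
  split_ifs <;> first | omega | simp_all

lemma sum_singleSiteTrans_mul (μ : ℝ) {t j : ℕ} (hj : j ≤ t) (g : ℕ → ℝ) :
    ∑ k ∈ range (t + 2), singleSiteTrans μ t j k * g k =
      (j / t) * binom2Mean (μ / 3) (g (j + 1)) (g j) (g (j - 1))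
      + ((t - j) / t) * binom2Mean μ (g j) (g (j + 1)) (g (j + 2)) := by
  simp only [singleSiteTrans_eq, add_mul, ite_mul, zero_mul, sum_add_distrib, sum_ite_eq',
    Finset.mem_range]
  rcases hj.lt_or_eq with hj | rfl
  · rw [if_pos (by omega), if_pos (by omega), if_pos (by omega), if_pos (by omega)]
    unfold binom2Mean; ring
  · rw [if_pos (by omega), if_pos (by omega), if_pos (by omega), if_neg (by omega)]
    unfold binom2Mean; ring

lemma sum_hatTrans_mul (μ : ℝ) {t j : ℕ} (hj : j ≤ t) (g : ℕ → ℝ) :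
    ∑ k ∈ range (t + 2), hatTrans μ t j k * g k =
      (j / t) * g (j + 1) + ((t - j) / t) * binom2Mean μ (g j) (g (j + 1)) (g (j + 2)) := by
  simp only [hatTrans_eq, add_mul, ite_mul, zero_mul, sum_add_distrib, sum_ite_eq',
    Finset.mem_range]
  rcases hj.lt_or_eq with hj | rfl
  · rw [if_pos (by omega), if_pos (by omega), if_pos (by omega)]
    unfold binom2Mean; ring
  · rw [if_pos (by omega), if_pos (by omega), if_neg (by omega)]
    unfold binom2Mean; ring

lemma natCast_sub_div_nonneg {t j : ℕ} (hj : j ≤ t) : (0 : ℝ) ≤ (t - j) / t :=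
  div_nonneg (sub_nonneg.2 (by exact_mod_cast hj)) (Nat.cast_nonneg t)

lemma natCast_div_add_sub_div_eq_one {t : ℕ} (ht : 0 < t) (j : ℕ) :
    (j / t : ℝ) + (t - j) / t = 1 := by
  field_simp; ring

lemma Nat.succ_ascFactorial_le (v M : ℕ) :
    (v + 1).ascFactorial M ≤ v.ascFactorial M + M * (v + M) ^ (M - 1) := by
  rcases M with _ | k
  · simp
  have hv : v.ascFactorial (k + 1) = v * (v + 1).ascFactorial k := by
    rw [Nat.succ_ascFactorial, Nat.ascFactorial_succ]
  have hpow : (v + 1).ascFactorial k ≤ (v + (k + 1)) ^ k :=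
    (Nat.ascFactorial_le_pow_add v k).trans (Nat.pow_le_pow_left (by omega) k)
  rw [Nat.ascFactorial_succ, hv, Nat.add_sub_cancel]
  nlinarith

lemma abs_ascFactorial_sub_le {M t a b : ℕ} (ha : a ≤ t + 2) (hb : b ≤ t + 2)
    (hab : a ≤ b + 1) (hba : b ≤ a + 1) :
    |(a.ascFactorial M : ℝ) - b.ascFactorial M| ≤ M * (t + M + 1) ^ (M - 1) := by
  have step : ∀ v ≤ t + 1, |((v + 1).ascFactorial M : ℝ) - v.ascFactorial M|
      ≤ M * (t + M + 1) ^ (M - 1) := by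
    intro v hv
    have hmono : v.ascFactorial M ≤ (v + 1).ascFactorial M := Nat.ascFactorial_le M (by omega)
    have hle : ((v + 1).ascFactorial M : ℝ) ≤ v.ascFactorial M + M * (v + M) ^ (M - 1) := by
      exact_mod_cast Nat.succ_ascFactorial_le v M
    have hvt : (v : ℝ) + M ≤ t + M + 1 := by
      have : (v : ℝ) ≤ t + 1 := by exact_mod_cast hv
      linarith
    rw [abs_of_nonneg (sub_nonneg.2 (by exact_mod_cast hmono))]
    calc ((v + 1).ascFactorial M : ℝ) - v.ascFactorial M ≤ M * (v + M) ^ (M - 1) := by linarith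
      _ ≤ M * (t + M + 1) ^ (M - 1) := by gcongr
  rcases (show a = b ∨ a = b + 1 ∨ b = a + 1 by omega) with rfl | rfl | rfl
  · rw [sub_self, abs_zero]; positivity
  · exact step b (by omega)
  · rw [abs_sub_comm]; exact step a (by omega)

/-- Rising factorial moments of the Pólya urn: of `t` balls, `t - j` are white, and a white
ball is added with probability `(t - j) / t`. -/
lemma polya_ascFactorial_mean {t j : ℕ} (hj : j ≤ t) (ht : 0 < t) (M : ℕ) :
    (j / t : ℝ) * (t - j).ascFactorial M + ((t - j) / t) * (t - j + 1).ascFactorial M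
      = (t + M) / t * (t - j).ascFactorial M := by
  have hurn : ((t - j : ℕ) : ℝ) * (t - j + 1).ascFactorial M
      = ((t - j : ℕ) + M : ℝ) * (t - j).ascFactorial M := by
    exact_mod_cast Nat.succ_ascFactorial (t - j) M
  rw [Nat.cast_sub hj] at hurn
  have ht' : (t : ℝ) ≠ 0 := by positivity
  field_simp
  linarith

lemma abs_mix_sub_polya_mean_le {t j M : ℕ} (hj : j ≤ t) (ht : 0 < t) {X Y E : ℝ}
    (hX : |X - (t - j).ascFactorial M| ≤ E) (hY : |Y - (t - j + 1).ascFactorial M| ≤ E) :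
    |(j / t : ℝ) * X + ((t - j) / t) * Y - (t + M) / t * (t - j).ascFactorial M| ≤ E := by
  have hp : (0 : ℝ) ≤ j / t := by positivity
  have hp' := natCast_sub_div_nonneg hj
  rw [← polya_ascFactorial_mean hj ht M]
  calc |(j / t : ℝ) * X + ((t - j) / t) * Y
        - ((j / t : ℝ) * (t - j).ascFactorial M + ((t - j) / t) * (t - j + 1).ascFactorial M)|
      = |(j / t : ℝ) * (X - (t - j).ascFactorial M)
          + ((t - j) / t) * (Y - (t - j + 1).ascFactorial M)| := by ring_nf
    _ ≤ (j / t : ℝ) * E + ((t - j) / t) * E := by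
        refine (abs_add_le _ _).trans ?_
        rw [abs_mul, abs_mul, abs_of_nonneg hp, abs_of_nonneg hp']
        gcongr
    _ = E := by rw [← add_mul, natCast_div_add_sub_div_eq_one ht, one_mul]

lemma abs_sum_singleSiteTrans_mul_ascFactorial_sub_le {μ : ℝ} (hμ₀ : 0 ≤ μ) (hμ₁ : μ ≤ 1)
    {t j : ℕ} (ht : 0 < t) (hj : j ≤ t) (M : ℕ) :
    |∑ k ∈ range (t + 2), singleSiteTrans μ t j k * ((t + 1 - k).ascFactorial M : ℝ)
        - (t + M) / t * (t - j).ascFactorial M| ≤ 2 * μ * (M * (t + M + 1) ^ (M - 1)) := by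
  rw [sum_singleSiteTrans_mul μ hj]
  refine abs_mix_sub_polya_mean_le hj ht ?_ ?_
  · rw [show t + 1 - (j + 1) = t - j by omega]
    refine (abs_binom2Mean_sub_le (D := M * (t + M + 1) ^ (M - 1)) (by positivity) (by linarith)
      ?_ ?_).trans ?_
    · exact abs_ascFactorial_sub_le (by omega) (by omega) (by omega) (by omega)
    · exact abs_ascFactorial_sub_le (by omega) (by omega) (by omega) (by omega)
    · have : (0 : ℝ) ≤ M * (t + M + 1) ^ (M - 1) := by positivity
      nlinarith
  · rw [show t + 1 - j = t - j + 1 by omega]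
    refine abs_binom2Mean_sub_le hμ₀ hμ₁ ?_ ?_
    · exact abs_ascFactorial_sub_le (by omega) (by omega) (by omega) (by omega)
    · exact abs_ascFactorial_sub_le (by omega) (by omega) (by omega) (by omega)

lemma abs_sum_hatTrans_mul_ascFactorial_sub_le {μ : ℝ} (hμ₀ : 0 ≤ μ) (hμ₁ : μ ≤ 1)
    {t j : ℕ} (ht : 0 < t) (hj : j ≤ t) (M : ℕ) :
    |∑ k ∈ range (t + 2), hatTrans μ t j k * ((t + 1 - k).ascFactorial M : ℝ)
        - (t + M) / t * (t - j).ascFactorial M| ≤ 2 * μ * (M * (t + M + 1) ^ (M - 1)) := by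
  rw [sum_hatTrans_mul μ hj]
  refine abs_mix_sub_polya_mean_le hj ht ?_ ?_
  · rw [show t + 1 - (j + 1) = t - j by omega, sub_self, abs_zero]
    positivity
  · rw [show t + 1 - j = t - j + 1 by omega]
    refine abs_binom2Mean_sub_le hμ₀ hμ₁ ?_ ?_
    · exact abs_ascFactorial_sub_le (by omega) (by omega) (by omega) (by omega)
    · exact abs_ascFactorial_sub_le (by omega) (by omega) (by omega) (by omega)

structure IsPopulationKernel (q : ℕ → ℕ → ℕ → ℝ) (r₀ : ℕ) : Prop where
  nonneg : ∀ t, r₀ ≤ t → ∀ j ≤ t, ∀ k, 0 ≤ q t j k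
  eq_zero_of_lt : ∀ t, r₀ ≤ t → ∀ j ≤ t, ∀ k, t + 1 < k → q t j k = 0
  sum_eq_one : ∀ t, r₀ ≤ t → ∀ j ≤ t, ∑ k ∈ range (t + 2), q t j k = 1

/-- From `j` mutants at time `t`, the number `t - j` of other individuals evolves like a Pólya
urn up to an error of order `ε` in its rising factorial moments; for the urn itself the
difference below vanishes (`polya_ascFactorial_mean`). -/
structure IsNearPolyaKernel (q : ℕ → ℕ → ℕ → ℝ) (r₀ : ℕ) (ε : ℝ) : Prop
    extends IsPopulationKernel q r₀ where
  abs_moment_sub_le : ∀ M t, r₀ ≤ t → ∀ j ≤ t,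
    |∑ k ∈ range (t + 2), q t j k * ((t + 1 - k).ascFactorial M : ℝ)
        - (t + M) / t * (t - j).ascFactorial M| ≤ 2 * ε * (M * (t + M + 1) ^ (M - 1))

lemma isNearPolyaKernel_singleSiteTrans {μ : ℝ} (hμ : μ ∈ Set.Icc 0 1) {r₀ : ℕ} (hr₀ : 0 < r₀) :
    IsNearPolyaKernel (singleSiteTrans μ) r₀ μ where
  nonneg t _ j hj k := by
    have := natCast_sub_div_nonneg hj
    obtain ⟨hμ₀, hμ₁⟩ := hμ
    have : 0 ≤ 1 - μ := by linarith
    have : 0 ≤ 1 - μ / 3 := by linarith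
    unfold singleSiteTrans
    split_ifs <;> positivity
  eq_zero_of_lt t _ j hj k hk := by
    unfold singleSiteTrans
    split_ifs <;> first | rfl | omega | simp [show j = t by omega]
  sum_eq_one t ht j hj := by
    have h := sum_singleSiteTrans_mul μ hj 1
    simp only [Pi.one_apply, mul_one, binom2Mean_self] at h
    rw [h, natCast_div_add_sub_div_eq_one (by omega)]
  abs_moment_sub_le M t ht j hj :=
    abs_sum_singleSiteTrans_mul_ascFactorial_sub_le hμ.1 hμ.2 (by omega) hj M

lemma isNearPolyaKernel_hatTrans {μ : ℝ} (hμ : μ ∈ Set.Icc 0 1) {r₀ : ℕ} (hr₀ : 0 < r₀) :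
    IsNearPolyaKernel (hatTrans μ) r₀ μ where
  nonneg t _ j hj k := by
    have := natCast_sub_div_nonneg hj
    obtain ⟨hμ₀, hμ₁⟩ := hμ
    have : 0 ≤ 1 - μ := by linarith
    unfold hatTrans
    split_ifs <;> positivity
  eq_zero_of_lt t _ j hj k hk := by
    unfold hatTrans
    split_ifs <;> first | rfl | omega | simp [show j = t by omega]
  sum_eq_one t ht j hj := by
    have h := sum_hatTrans_mul μ hj 1
    simp only [Pi.one_apply, mul_one, binom2Mean_self] at h
    rw [h, natCast_div_add_sub_div_eq_one (by omega)]
  abs_moment_sub_le M t ht j hj :=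
    abs_sum_hatTrans_mul_ascFactorial_sub_le hμ.1 hμ.2 (by omega) hj M

/-! ### Rising factorial moments of the marginal laws -/

/-- The law at time `r₀ + m` of a chain with kernel `q` started at `j₀` at time `r₀`. States
never exceed the current time, so the sum over the previous state is finite. -/
noncomputable def marginal (q : ℕ → ℕ → ℕ → ℝ) (r₀ j₀ : ℕ) : ℕ → ℕ → ℝ
  | 0, k => if k = j₀ then 1 else 0
  | m + 1, k => ∑ j ∈ range (r₀ + m + 1), marginal q r₀ j₀ m j * q (r₀ + m) j k

noncomputable def ascMoment (q : ℕ → ℕ → ℕ → ℝ) (r₀ j₀ M m : ℕ) : ℝ :=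
  ∑ k ∈ range (r₀ + m + 1), marginal q r₀ j₀ m k * ((r₀ + m - k).ascFactorial M : ℝ)

section Marginal

variable {q : ℕ → ℕ → ℕ → ℝ} {r₀ j₀ : ℕ}

lemma marginal_eq_zero_of_lt (hq : IsPopulationKernel q r₀) (hj₀ : j₀ ≤ r₀) :
    ∀ {m k : ℕ}, r₀ + m < k → marginal q r₀ j₀ m k = 0
  | 0, k, hk => if_neg (by omega)
  | m + 1, k, hk => sum_eq_zero fun j hj => by
      rw [hq.eq_zero_of_lt (r₀ + m) (by omega) j (by simp at hj; omega) k (by omega), mul_zero]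

lemma marginal_nonneg (hq : IsPopulationKernel q r₀) : ∀ m k, 0 ≤ marginal q r₀ j₀ m k
  | 0, k => by unfold marginal; positivity
  | m + 1, k => sum_nonneg fun j hj =>
      mul_nonneg (marginal_nonneg hq m j) (hq.nonneg _ (by omega) j (by simp at hj; omega) k)

lemma sum_marginal (hq : IsPopulationKernel q r₀) (hj₀ : j₀ ≤ r₀) :
    ∀ m, ∑ k ∈ range (r₀ + m + 1), marginal q r₀ j₀ m k = 1
  | 0 => by simp [marginal, Nat.lt_succ_of_le hj₀]
  | m + 1 => by
      simp only [marginal, ← add_assoc]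
      rw [sum_comm]
      simp_rw [← mul_sum]
      rw [← sum_marginal hq hj₀ m]
      refine sum_congr rfl fun j hj => ?_
      rw [hq.sum_eq_one _ (by omega) j (by simp at hj; omega), mul_one]

lemma ascMoment_zero (hj₀ : j₀ ≤ r₀) (M : ℕ) :
    ascMoment q r₀ j₀ M 0 = (r₀ - j₀).ascFactorial M := by
  simp [ascMoment, marginal, Nat.lt_succ_of_le hj₀]

lemma IsNearPolyaKernel.eps_nonneg {ε : ℝ} (hq : IsNearPolyaKernel q r₀ ε) : 0 ≤ ε := by
  have h := hq.abs_moment_sub_le 1 r₀ le_rfl 0 (Nat.zero_le _)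
  norm_num at h
  linarith [(abs_nonneg _).trans h]

lemma abs_ascMoment_succ_sub_le {ε : ℝ} (hq : IsNearPolyaKernel q r₀ ε) (hj₀ : j₀ ≤ r₀)
    (M m : ℕ) :
    |ascMoment q r₀ j₀ M (m + 1) - ((r₀ + m : ℕ) + M) / (r₀ + m : ℕ) * ascMoment q r₀ j₀ M m|
      ≤ 2 * ε * (M * ((r₀ + m : ℕ) + M + 1) ^ (M - 1)) := by
  set t := r₀ + m
  have hsucc : ascMoment q r₀ j₀ M (m + 1) = ∑ j ∈ range (t + 1), marginal q r₀ j₀ m j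
      * ∑ k ∈ range (t + 2), q t j k * ((t + 1 - k).ascFactorial M : ℝ) := by
    simp only [ascMoment, marginal, sum_mul, mul_sum, mul_assoc, ← add_assoc]
    exact sum_comm
  have hcur : (t + M) / t * ascMoment q r₀ j₀ M m
      = ∑ j ∈ range (t + 1), marginal q r₀ j₀ m j * ((t + M) / t * (t - j).ascFactorial M) := by
    simp only [ascMoment, mul_sum]
    exact sum_congr rfl fun _ _ => by ring
  rw [hsucc, hcur]
  exact abs_sum_mul_sub_sum_mul_le (fun j _ => marginal_nonneg hq.toIsPopulationKernel m j)
    (sum_marginal hq.toIsPopulationKernel hj₀ m)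
    fun j hj => hq.abs_moment_sub_le M t (by omega) j (by simp at hj; omega)

lemma natCast_mul_pow_div_pow_le (M t : ℕ) :
    M * ((t : ℝ) + M + 1) ^ (M - 1) / (t + 1) ^ M ≤ M * (M + 1) ^ (M - 1) / (t + 1) := by
  rcases M with _ | M
  · simp
  have hle : ((t : ℝ) + (M + 1 : ℕ) + 1) ^ M ≤ ((M + 1 : ℕ) + 1) ^ M * (t + 1) ^ M := by
    rw [← mul_pow]
    gcongr
    push_cast
    nlinarith
  rw [div_le_div_iff₀ (by positivity) (by positivity), Nat.add_sub_cancel, pow_succ]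
  nlinarith [mul_le_mul_of_nonneg_left hle (show (0 : ℝ) ≤ (M + 1 : ℕ) * (t + 1) by positivity)]

lemma abs_ascMoment_div_succ_sub_le {ε : ℝ} (hq : IsNearPolyaKernel q r₀ ε) (hj₀ : j₀ ≤ r₀)
    (hr₀ : 0 < r₀) (M i : ℕ) :
    |ascMoment q r₀ j₀ M (i + 1) / (r₀ + (i + 1)).ascFactorial M
        - ascMoment q r₀ j₀ M i / (r₀ + i).ascFactorial M|
      ≤ 2 * M * (M + 1) ^ (M - 1) * ε * (1 / (r₀ + i + 1)) := by
  set t := r₀ + i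
  have hε := hq.eps_nonneg
  have ht : (t : ℝ) ≠ 0 := Nat.cast_ne_zero.2 (by omega)
  have hpow : ((t : ℝ) + 1) ^ M ≤ (t + 1).ascFactorial M := by
    exact_mod_cast Nat.pow_succ_le_ascFactorial (t + 1) M
  have hpos : (0 : ℝ) < t.ascFactorial M := by
    exact_mod_cast (Nat.pow_pos (by omega)).trans_le (Nat.pow_succ_le_ascFactorial t M)
  have hpos' : (0 : ℝ) < (t + 1).ascFactorial M :=
    hpos.trans_le (by exact_mod_cast Nat.ascFactorial_le M (Nat.le_succ t))
  have hurn : ((t + 1).ascFactorial M : ℝ) = (t + M) / t * t.ascFactorial M := by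
    have h : (t : ℝ) * (t + 1).ascFactorial M = (t + M) * t.ascFactorial M := by
      exact_mod_cast Nat.succ_ascFactorial t M
    field_simp
    linarith
  have hdiff : ascMoment q r₀ j₀ M (i + 1) / (r₀ + (i + 1)).ascFactorial M
        - ascMoment q r₀ j₀ M i / t.ascFactorial M
      = (ascMoment q r₀ j₀ M (i + 1) - (t + M) / t * ascMoment q r₀ j₀ M i)
          / (t + 1).ascFactorial M := by
    rw [show r₀ + (i + 1) = t + 1 by omega, hurn]
    field_simp
  rw [hdiff, abs_div, abs_of_pos hpos']
  calc _ ≤ 2 * ε * (M * ((t : ℝ) + M + 1) ^ (M - 1)) / (t + 1) ^ M :=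
        div_le_div₀ (by positivity) (abs_ascMoment_succ_sub_le hq hj₀ M i) (by positivity) hpow
    _ = 2 * ε * (M * ((t : ℝ) + M + 1) ^ (M - 1) / (t + 1) ^ M) := by ring
    _ ≤ 2 * ε * (M * (M + 1) ^ (M - 1) / (t + 1)) :=
        mul_le_mul_of_nonneg_left (natCast_mul_pow_div_pow_le M t) (by positivity)
    _ = 2 * M * (M + 1) ^ (M - 1) * ε * (1 / (r₀ + i + 1)) := by push_cast [t]; ring

lemma sum_range_inv_le_harmonic (r₀ m : ℕ) :
    ∑ i ∈ range m, (1 : ℝ) / (r₀ + i + 1) ≤ harmonic (r₀ + m) := by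
  have hH : (harmonic (r₀ + m) : ℝ) = ∑ i ∈ range (r₀ + m), (1 : ℝ) / (i + 1) := by
    simp [harmonic]
  have h₀ : 0 ≤ ∑ i ∈ range r₀, (1 : ℝ) / (i + 1) := by positivity
  rw [hH, sum_range_add]
  push_cast
  simp only [add_assoc] at h₀ ⊢
  linarith

lemma abs_ascMoment_div_sub_le {ε : ℝ} (hq : IsNearPolyaKernel q r₀ ε) (hj₀ : j₀ ≤ r₀)
    (hr₀ : 0 < r₀) (M m : ℕ) :
    |ascMoment q r₀ j₀ M m / (r₀ + m).ascFactorial M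
        - (r₀ - j₀).ascFactorial M / r₀.ascFactorial M|
      ≤ 2 * M * (M + 1) ^ (M - 1) * ε * harmonic (r₀ + m) := by
  set f : ℕ → ℝ := fun i => ascMoment q r₀ j₀ M i / (r₀ + i).ascFactorial M
  have hsum := dist_le_range_sum_of_dist_le (f := f)
      (d := fun i => 2 * M * (M + 1) ^ (M - 1) * ε * (1 / (r₀ + i + 1))) m fun {i} _ => by
    rw [dist_comm, Real.dist_eq]
    exact abs_ascMoment_div_succ_sub_le hq hj₀ hr₀ M i
  rw [dist_comm, Real.dist_eq] at hsum
  simp only [f, add_zero, ascMoment_zero hj₀] at hsum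
  refine hsum.trans ?_
  rw [← mul_sum]
  exact mul_le_mul_of_nonneg_left (sum_range_inv_le_harmonic r₀ m)
    (mul_nonneg (by positivity) hq.eps_nonneg)

end Marginal

lemma ascFactorial_div_pow_sub_le {v n : ℕ} (hv : v ≤ n) (hn : 0 < n) (M : ℕ) :
    0 ≤ (v.ascFactorial M : ℝ) / n ^ M - ((v : ℝ) / n) ^ M
      ∧ (v.ascFactorial M : ℝ) / n ^ M - ((v : ℝ) / n) ^ M ≤ M ^ 2 * (M + 1) ^ (M - 1) / n := by
  have hn' : (0 : ℝ) < n := by exact_mod_cast hn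
  have hlow : (v : ℝ) ^ M ≤ v.ascFactorial M := by
    exact_mod_cast Nat.pow_succ_le_ascFactorial v M
  have hup : (v.ascFactorial M : ℝ) ≤ (v + M) ^ M := by
    exact_mod_cast (Nat.ascFactorial_le M (Nat.le_succ v)).trans (Nat.ascFactorial_le_pow_add v M)
  have hgap : ((v : ℝ) + M) ^ M - v ^ M ≤ M * M * (v + M) ^ (M - 1) := by
    have h := abs_pow_sub_pow_le ((v : ℝ) + M) v M
    rw [add_sub_cancel_left, Nat.abs_cast, Nat.abs_cast,
      abs_of_nonneg (by positivity : (0 : ℝ) ≤ v + M), max_eq_left (by linarith)] at h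
    exact (le_abs_self _).trans h
  have hvM : ((v : ℝ) + M) ^ (M - 1) ≤ ((M + 1) * n) ^ (M - 1) := by
    have : (v : ℝ) ≤ n := by exact_mod_cast hv
    have : (1 : ℝ) ≤ n := by exact_mod_cast hn
    gcongr
    nlinarith
  rw [div_pow, ← sub_div]
  refine ⟨div_nonneg (by linarith) (by positivity), ?_⟩
  rcases M with _ | M
  · simp
  rw [div_le_div_iff₀ (by positivity) hn', Nat.add_sub_cancel, pow_succ, mul_pow] at *
  push_cast at *
  calc ((v.ascFactorial (M + 1) : ℝ) - v ^ (M + 1)) * n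
      ≤ (M + 1) * (M + 1) * ((M + 1 + 1) ^ M * n ^ M) * n := by
        gcongr
        linarith [mul_le_mul_of_nonneg_left hvM (show (0 : ℝ) ≤ (M + 1) * (M + 1) by positivity)]
    _ = (M + 1) ^ 2 * (M + 1 + 1) ^ M * (n ^ M * n) := by ring

lemma tendsto_ascFactorial_div_pow (M : ℕ) :
    Tendsto (fun n : ℕ => (n.ascFactorial M : ℝ) / n ^ M) atTop (nhds 1) := by
  set C : ℝ := M ^ 2 * (M + 1) ^ (M - 1)
  have hup := (tendsto_const_div_atTop_nhds_zero_nat C).const_add 1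
  rw [add_zero] at hup
  have h : ∀ᶠ n : ℕ in atTop, 0 ≤ (n.ascFactorial M : ℝ) / n ^ M - 1
      ∧ (n.ascFactorial M : ℝ) / n ^ M - 1 ≤ C / n := by
    filter_upwards [eventually_gt_atTop 0] with n hn
    have h := ascFactorial_div_pow_sub_le le_rfl hn M
    rwa [div_self (by positivity), one_pow] at h
  exact tendsto_of_tendsto_of_tendsto_of_le_of_le' tendsto_const_nhds hup
    (h.mono fun n hn => by linarith [hn.1]) (h.mono fun n hn => by linarith [hn.2])

lemma abs_sum_mul_pow_sub_le {n : ℕ} (hn : 0 < n) {w : ℕ → ℝ} (hw : ∀ k, 0 ≤ w k)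
    (hw₁ : ∑ k ∈ range (n + 1), w k = 1) (M : ℕ) :
    |∑ k ∈ range (n + 1), w k * (((n : ℝ) - k) / n) ^ M
        - (∑ k ∈ range (n + 1), w k * (n - k).ascFactorial M) / n ^ M|
      ≤ M ^ 2 * (M + 1) ^ (M - 1) / n := by
  simp only [sum_div, mul_div_assoc]
  rw [abs_sub_comm]
  refine abs_sum_mul_sub_sum_mul_le (fun k _ => hw k) hw₁ fun k hk => ?_
  have hk : k ≤ n := by simp at hk; omega
  obtain ⟨h₀, h₁⟩ := ascFactorial_div_pow_sub_le (Nat.sub_le n k) hn M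
  rw [Nat.cast_sub hk] at h₀ h₁
  rwa [abs_of_nonneg h₀, ← mul_div_assoc]

lemma tendsto_mul_one_add_log_of_tendsto_mul {ε : ℕ → ℝ} {θ : ℝ}
    (h : Tendsto (fun n : ℕ => (n : ℝ) * ε n) atTop (nhds θ)) :
    Tendsto (fun n : ℕ => ε n * (1 + Real.log n)) atTop (nhds 0) := by
  have hlog : Tendsto (fun n : ℕ => (1 + Real.log n) / n) atTop (nhds 0) := by
    have h₁ := tendsto_one_div_atTop_nhds_zero_nat (𝕜 := ℝ)
    have h₂ := (Real.tendsto_pow_log_div_mul_add_atTop 1 0 1 one_ne_zero).comp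
      tendsto_natCast_atTop_atTop
    simpa [add_div] using h₁.add h₂
  simpa using (h.mul hlog).congr' (by
    filter_upwards [eventually_gt_atTop 0] with n hn
    field_simp)

theorem tendsto_sum_marginal_mul_pow {q : ℕ → ℕ → ℕ → ℕ → ℝ} {ε : ℕ → ℝ} {r₀ j₀ : ℕ}
    (hq : ∀ n, IsNearPolyaKernel (q n) r₀ (ε n))
    (hε : Tendsto (fun n : ℕ => ε n * (1 + Real.log n)) atTop (nhds 0))
    (hr₀ : 0 < r₀) (hj₀ : j₀ ≤ r₀) (M : ℕ) :
    Tendsto (fun n : ℕ =>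
        ∑ k ∈ range (n + 1), marginal (q n) r₀ j₀ (n - r₀) k * (((n : ℝ) - k) / n) ^ M)
      atTop (nhds ((r₀ - j₀).ascFactorial M / r₀.ascFactorial M)) := by
  set V : ℕ → ℝ := fun n => ascMoment (q n) r₀ j₀ M (n - r₀)
  have hnorm : Tendsto (fun n : ℕ => V n / n.ascFactorial M) atTop
      (nhds ((r₀ - j₀).ascFactorial M / r₀.ascFactorial M)) := by
    have hbound := hε.const_mul (2 * M * (M + 1) ^ (M - 1) : ℝ)
    rw [mul_zero] at hbound
    refine tendsto_iff_norm_sub_tendsto_zero.2 (squeeze_zero_norm' ?_ hbound)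
    filter_upwards [eventually_ge_atTop r₀] with n hn
    have h := abs_ascMoment_div_sub_le (hq n) hj₀ hr₀ M (n - r₀)
    rw [Nat.add_sub_cancel' hn] at h
    rw [Real.norm_eq_abs, Real.norm_eq_abs, abs_abs, ← mul_assoc]
    exact h.trans (mul_le_mul_of_nonneg_left (harmonic_le_one_add_log n)
      (mul_nonneg (by positivity) (hq n).eps_nonneg))
  have herr : Tendsto (fun n : ℕ => ∑ k ∈ range (n + 1),
      marginal (q n) r₀ j₀ (n - r₀) k * (((n : ℝ) - k) / n) ^ M - V n / n ^ M) atTop (nhds 0) := by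
    refine squeeze_zero_norm' ?_
      (tendsto_const_div_atTop_nhds_zero_nat ((M : ℝ) ^ 2 * (M + 1) ^ (M - 1)))
    filter_upwards [eventually_ge_atTop r₀] with n hn
    have hsum := sum_marginal (hq n).toIsPopulationKernel hj₀ (n - r₀)
    rw [Nat.add_sub_cancel' hn] at hsum
    have h := abs_sum_mul_pow_sub_le (by omega)
      (marginal_nonneg (hq n).toIsPopulationKernel (n - r₀)) hsum M
    simpa [V, ascMoment, Nat.add_sub_cancel' hn] using h
  have hlim := herr.add (hnorm.mul (tendsto_ascFactorial_div_pow M))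
  rw [zero_add, mul_one] at hlim
  refine hlim.congr' ?_
  filter_upwards [eventually_gt_atTop 0] with n hn
  have : (n.ascFactorial M : ℝ) ≠ 0 := by
    exact_mod_cast (Nat.pow_pos hn).trans_le (Nat.pow_succ_le_ascFactorial n M) |>.ne'
  field_simp
  ring

/-! ### Method of moments on `[0, 1]` -/

lemma abs_integral_mul_sub_le {f g ρ : ℝ → ℝ} (hf : ContinuousOn f (Set.Icc 0 1))
    (hg : ContinuousOn g (Set.Icc 0 1)) (hρ : Continuous ρ) (hρ₀ : ∀ y ∈ Set.Icc 0 1, 0 ≤ ρ y)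
    {δ : ℝ} (hfg : ∀ y ∈ Set.Icc 0 1, |f y - g y| ≤ δ) :
    |(∫ y in (0 : ℝ)..1, f y * ρ y) - ∫ y in (0 : ℝ)..1, g y * ρ y|
      ≤ δ * ∫ y in (0 : ℝ)..1, ρ y := by
  have hint : ∀ h : ℝ → ℝ, ContinuousOn h (Set.Icc 0 1) →
      IntervalIntegrable (fun y => h y * ρ y) volume 0 1 := fun h hh => by
    refine ContinuousOn.intervalIntegrable ?_
    rw [Set.uIcc_of_le zero_le_one]
    exact hh.mul hρ.continuousOn
  have hsub : (∫ y in (0 : ℝ)..1, f y * ρ y) - ∫ y in (0 : ℝ)..1, g y * ρ y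
      = ∫ y in (0 : ℝ)..1, (f y * ρ y - g y * ρ y) :=
    (intervalIntegral.integral_sub (hint f hf) (hint g hg)).symm
  rw [hsub, ← intervalIntegral.integral_const_mul, ← Real.norm_eq_abs]
  refine intervalIntegral.norm_integral_le_of_norm_le (g := fun y => δ * ρ y) zero_le_one
    (Filter.Eventually.of_forall fun y hy => ?_) ((continuous_const.mul hρ).intervalIntegrable _ _)
  have hy' : y ∈ Set.Icc (0 : ℝ) 1 := Set.Ioc_subset_Icc_self hy
  rw [Real.norm_eq_abs, ← sub_mul, abs_mul, abs_of_nonneg (hρ₀ y hy')]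
  exact mul_le_mul_of_nonneg_right (hfg y hy') (hρ₀ y hy')

noncomputable def ramp (c δ x : ℝ) : ℝ := max 0 (min 1 ((c - x) / δ))

lemma continuous_ramp (c δ : ℝ) : Continuous (ramp c δ) := by
  unfold ramp; fun_prop

lemma ramp_mem_Icc (c δ x : ℝ) : ramp c δ x ∈ Set.Icc 0 1 :=
  ⟨le_max_left _ _, max_le zero_le_one (min_le_left _ _)⟩

lemma ramp_eq_one {c δ x : ℝ} (hδ : 0 < δ) (hx : x ≤ c - δ) : ramp c δ x = 1 := by
  have : 1 ≤ (c - x) / δ := by rw [le_div_iff₀ hδ]; linarith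
  simp [ramp, min_eq_left this]

lemma ramp_eq_zero {c δ x : ℝ} (hδ : 0 < δ) (hx : c ≤ x) : ramp c δ x = 0 :=
  max_eq_left ((min_le_right _ _).trans (div_nonpos_of_nonpos_of_nonneg (by linarith) hδ.le))

lemma integral_le_integral_mul {ρ g : ℝ → ℝ} (hρ : Continuous ρ) (hg : Continuous g)
    (hρ₀ : ∀ y ∈ Set.Icc 0 1, 0 ≤ ρ y) (hg₀ : ∀ y, 0 ≤ g y) {d : ℝ} (hd : d ∈ Set.Icc 0 1)
    (hg₁ : ∀ y ∈ Set.Icc 0 d, g y = 1) :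
    ∫ y in (0 : ℝ)..d, ρ y ≤ ∫ y in (0 : ℝ)..1, g y * ρ y := by
  have hgρ : ∀ a b, IntervalIntegrable (fun y => g y * ρ y) volume a b :=
    fun a b => (hg.mul hρ).intervalIntegrable a b
  rw [← intervalIntegral.integral_add_adjacent_intervals (hgρ 0 d) (hgρ d 1)]
  have head : ∫ y in (0 : ℝ)..d, g y * ρ y = ∫ y in (0 : ℝ)..d, ρ y := by
    refine intervalIntegral.integral_congr fun y hy => ?_
    rw [Set.uIcc_of_le hd.1] at hy
    simp [hg₁ y hy]
  have tail : 0 ≤ ∫ y in d..(1 : ℝ), g y * ρ y :=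
    intervalIntegral.integral_nonneg hd.2 fun y hy =>
      mul_nonneg (hg₀ y) (hρ₀ y ⟨hd.1.trans hy.1, hy.2⟩)
  linarith

lemma integral_mul_le_integral {ρ g : ℝ → ℝ} (hρ : Continuous ρ) (hg : Continuous g)
    (hρ₀ : ∀ y ∈ Set.Icc 0 1, 0 ≤ ρ y) (hg₁ : ∀ y, g y ≤ 1) {d : ℝ} (hd : d ∈ Set.Icc 0 1)
    (hg₀ : ∀ y ∈ Set.Icc d 1, g y = 0) :
    ∫ y in (0 : ℝ)..1, g y * ρ y ≤ ∫ y in (0 : ℝ)..d, ρ y := by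
  have hgρ : ∀ a b, IntervalIntegrable (fun y => g y * ρ y) volume a b :=
    fun a b => (hg.mul hρ).intervalIntegrable a b
  rw [← intervalIntegral.integral_add_adjacent_intervals (hgρ 0 d) (hgρ d 1)]
  have head : ∫ y in (0 : ℝ)..d, g y * ρ y ≤ ∫ y in (0 : ℝ)..d, ρ y :=
    intervalIntegral.integral_mono_on hd.1 (hgρ 0 d) (hρ.intervalIntegrable 0 d) fun y hy =>
      mul_le_of_le_one_left (hρ₀ y ⟨hy.1, hy.2.trans hd.2⟩) (hg₁ y)
  have tail : ∫ y in d..(1 : ℝ), g y * ρ y = 0 := by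
    rw [← intervalIntegral.integral_zero (a := d) (b := 1)]
    refine intervalIntegral.integral_congr fun y hy => ?_
    rw [Set.uIcc_of_le hd.2] at hy
    simp [hg₀ y hy]
  linarith


section MethodOfMoments

variable {α ι : Type*} {l : Filter α} {s : α → Finset ι} {w x : α → ι → ℝ} {ρ : ℝ → ℝ}

open Polynomial in
lemma tendsto_sum_mul_eval_of_moments (hρ : Continuous ρ)
    (hmom : ∀ M : ℕ, Tendsto (fun n => ∑ k ∈ s n, w n k * x n k ^ M) l
      (nhds (∫ y in (0 : ℝ)..1, y ^ M * ρ y)))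
    (p : ℝ[X]) :
    Tendsto (fun n => ∑ k ∈ s n, w n k * p.eval (x n k)) l
      (nhds (∫ y in (0 : ℝ)..1, p.eval y * ρ y)) := by
  induction p using Polynomial.induction_on' with
  | add p p' hp hp' =>
    have hint : ∀ p : ℝ[X], IntervalIntegrable (fun y => p.eval y * ρ y) volume 0 1 :=
      fun p => (p.continuous.mul hρ).intervalIntegrable 0 1
    simp only [eval_add, mul_add, add_mul, sum_add_distrib]
    rw [intervalIntegral.integral_add (hint p) (hint p')]
    exact hp.add hp'
  | monomial i c =>
    have hI : ∫ y in (0 : ℝ)..1, c * y ^ i * ρ y = c * ∫ y in (0 : ℝ)..1, y ^ i * ρ y := by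
      rw [← intervalIntegral.integral_const_mul]
      exact intervalIntegral.integral_congr fun y _ => by ring
    simp only [eval_monomial, hI]
    refine ((hmom i).const_mul c).congr fun n => ?_
    rw [mul_sum]
    exact sum_congr rfl fun k _ => by ring

lemma tendsto_sum_mul_of_moments (hρ : Continuous ρ) (hρ₀ : ∀ y ∈ Set.Icc 0 1, 0 ≤ ρ y)
    (hw : ∀ᶠ n in l, ∀ k ∈ s n, 0 ≤ w n k ∧ x n k ∈ Set.Icc 0 1)
    (hw₁ : ∀ᶠ n in l, ∑ k ∈ s n, w n k = 1)
    (hmom : ∀ M : ℕ, Tendsto (fun n => ∑ k ∈ s n, w n k * x n k ^ M) l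
      (nhds (∫ y in (0 : ℝ)..1, y ^ M * ρ y)))
    {f : ℝ → ℝ} (hf : ContinuousOn f (Set.Icc 0 1)) :
    Tendsto (fun n => ∑ k ∈ s n, w n k * f (x n k)) l
      (nhds (∫ y in (0 : ℝ)..1, f y * ρ y)) := by
  set I := ∫ y in (0 : ℝ)..1, ρ y
  have hI : 0 ≤ I := intervalIntegral.integral_nonneg zero_le_one hρ₀
  refine Metric.tendsto_nhds.2 fun η hη => ?_
  set δ := η / (3 + I)
  have hδ : 0 < δ := by positivity
  have hδη : δ * (2 + I) < η := by
    rw [div_mul_eq_mul_div, div_lt_iff₀ (by positivity)]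
    nlinarith
  obtain ⟨p, hp⟩ := exists_polynomial_near_of_continuousOn 0 1 f hf δ hδ
  have hint := abs_integral_mul_sub_le p.continuous.continuousOn hf hρ hρ₀ fun y hy => (hp y hy).le
  filter_upwards [hw, hw₁, Metric.tendsto_nhds.1 (tendsto_sum_mul_eval_of_moments hρ hmom p) δ hδ]
    with n hwn hwn₁ hpn
  have hsum : |∑ k ∈ s n, w n k * f (x n k) - ∑ k ∈ s n, w n k * p.eval (x n k)| ≤ δ :=
    abs_sum_mul_sub_sum_mul_le (fun k hk => (hwn k hk).1) hwn₁ fun k hk => by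
      rw [abs_sub_comm]; exact (hp _ (hwn k hk).2).le
  rw [Real.dist_eq] at hpn ⊢
  have h₁ := abs_sub_le (∑ k ∈ s n, w n k * f (x n k)) (∑ k ∈ s n, w n k * p.eval (x n k))
    (∫ y in (0 : ℝ)..1, f y * ρ y)
  have h₂ := abs_sub_le (∑ k ∈ s n, w n k * p.eval (x n k)) (∫ y in (0 : ℝ)..1, p.eval y * ρ y)
    (∫ y in (0 : ℝ)..1, f y * ρ y)
  linarith [show δ * (2 + I) = 2 * δ + δ * I by ring]

lemma tendsto_sum_filter_lt_of_moments (hρ : Continuous ρ) (hρ₀ : ∀ y ∈ Set.Icc 0 1, 0 ≤ ρ y)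
    (hw : ∀ᶠ n in l, ∀ k ∈ s n, 0 ≤ w n k ∧ x n k ∈ Set.Icc 0 1)
    (hw₁ : ∀ᶠ n in l, ∑ k ∈ s n, w n k = 1)
    (hmom : ∀ M : ℕ, Tendsto (fun n => ∑ k ∈ s n, w n k * x n k ^ M) l
      (nhds (∫ y in (0 : ℝ)..1, y ^ M * ρ y)))
    {c : ℝ} (hc : c ∈ Set.Ioo 0 1) :
    Tendsto (fun n => ∑ k ∈ s n with x n k < c, w n k) l (nhds (∫ y in (0 : ℝ)..c, ρ y)) := by
  have hF : Continuous fun d => ∫ y in (0 : ℝ)..d, ρ y :=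
    intervalIntegral.continuous_primitive (fun a b => hρ.intervalIntegrable a b) 0
  have hS : ∀ g : ℝ → ℝ, Continuous g →
      Tendsto (fun n => ∑ k ∈ s n, w n k * g (x n k)) l (nhds (∫ y in (0 : ℝ)..1, g y * ρ y)) :=
    fun g hg => tendsto_sum_mul_of_moments hρ hρ₀ hw hw₁ hmom hg.continuousOn
  obtain ⟨hc₀, hc₁⟩ := hc
  refine tendsto_order.2 ⟨fun a' ha' => ?_, fun b' hb' => ?_⟩
  · obtain ⟨e, he, hball⟩ :=
      Metric.eventually_nhds_iff.1 ((hF.tendsto c).eventually (lt_mem_nhds ha'))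
    set δ := min (e / 2) (c / 2)
    have hδ : 0 < δ := lt_min (by linarith) (by linarith)
    have hδc : δ ≤ c / 2 := min_le_right _ _
    have hδe : δ < e := (min_le_left _ _).trans_lt (by linarith)
    have hlow : a' < ∫ y in (0 : ℝ)..1, ramp c δ y * ρ y :=
      (hball (by rw [Real.dist_eq, abs_of_neg (by linarith)]; linarith)).trans_le
        (integral_le_integral_mul hρ (continuous_ramp c δ) hρ₀ (fun y => (ramp_mem_Icc c δ y).1)
          ⟨by linarith, by linarith⟩ fun y hy => ramp_eq_one hδ hy.2)
    filter_upwards [(hS _ (continuous_ramp c δ)).eventually_const_lt hlow, hw] with n hn hwn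
    refine hn.trans_le ?_
    rw [sum_filter]
    refine sum_le_sum fun k hk => ?_
    split_ifs with h
    · exact mul_le_of_le_one_right (hwn k hk).1 (ramp_mem_Icc c δ _).2
    · rw [ramp_eq_zero hδ (not_lt.1 h), mul_zero]
  · obtain ⟨e, he, hball⟩ :=
      Metric.eventually_nhds_iff.1 ((hF.tendsto c).eventually (gt_mem_nhds hb'))
    set δ := min (e / 2) ((1 - c) / 2)
    have hδ : 0 < δ := lt_min (by linarith) (by linarith)
    have hδc : δ ≤ (1 - c) / 2 := min_le_right _ _
    have hδe : δ < e := (min_le_left _ _).trans_lt (by linarith)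
    have hup : ∫ y in (0 : ℝ)..1, ramp (c + δ) δ y * ρ y < b' :=
      (integral_mul_le_integral hρ (continuous_ramp (c + δ) δ) hρ₀
          (fun y => (ramp_mem_Icc (c + δ) δ y).2) ⟨by linarith, by linarith⟩
          fun y hy => ramp_eq_zero hδ hy.1).trans_lt
        (hball (by rw [Real.dist_eq, add_sub_cancel_left, abs_of_pos hδ]; exact hδe))
    filter_upwards [(hS _ (continuous_ramp (c + δ) δ)).eventually_lt_const hup, hw]
      with n hn hwn
    refine lt_of_le_of_lt ?_ hn
    rw [sum_filter]
    refine sum_le_sum fun k hk => ?_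
    split_ifs with h
    · rw [ramp_eq_one hδ (by linarith), mul_one]
    · exact mul_nonneg (hwn k hk).1 (ramp_mem_Icc _ _ _).1

end MethodOfMoments

/-! ### Marginal laws of a Markov chain -/

def history {Ω : Type*} (B : ℕ → Ω → ℕ) (r₀ m : ℕ) (ω : Ω) : Fin (m + 1) → ℕ :=
  fun i => B (r₀ + i) ω

lemma history_succ {Ω : Type*} (B : ℕ → Ω → ℕ) (r₀ m : ℕ) (ω : Ω) :
    history B r₀ (m + 1) ω = Fin.snoc (history B r₀ m ω) (B (r₀ + m + 1) ω) := by
  funext i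
  refine Fin.lastCases ?_ (fun i => ?_) i
  · simp [history, add_assoc]
  · simp [history]

section Chain

variable {Ω : Type*} [MeasurableSpace Ω] {P : Measure Ω}

lemma measureReal_eq_tsum_inter [IsFiniteMeasure P] {α : Type*} [Countable α] {X : Ω → α}
    (hX : ∀ x, MeasurableSet {ω | X ω = x}) {A : Set Ω} (hA : MeasurableSet A) :
    P.real A = ∑' x, P.real (A ∩ {ω | X ω = x}) := by
  have hA' : A = ⋃ x, A ∩ {ω | X ω = x} := by ext ω; simp
  rw [measureReal_def, hA', measure_iUnion, ENNReal.tsum_toReal_eq (fun _ => measure_ne_top P _)]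
  · simp only [← hA']
    rfl
  · exact fun x y hxy => Set.disjoint_left.2 fun ω h₁ h₂ => hxy (h₁.2.symm.trans h₂.2)
  · exact fun x => hA.inter (hX x)

lemma measureReal_setOf_eq_sum [IsFiniteMeasure P] {X : Ω → ℕ} (hX : Measurable X)
    {s : Finset ℕ} (hs : ∀ k ∉ s, P.real {ω | X ω = k} = 0) (p : ℕ → Prop) [DecidablePred p] :
    P.real {ω | p (X ω)} = ∑ k ∈ s with p k, P.real {ω | X ω = k} := by
  have hA : MeasurableSet {ω | p (X ω)} := hX (MeasurableSet.of_discrete (s := {k | p k}))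
  rw [measureReal_eq_tsum_inter (fun k => hX (measurableSet_singleton k)) hA,
    tsum_eq_sum (s := s), sum_filter]
  · refine sum_congr rfl fun k _ => ?_
    split_ifs with hk
    · congr 1
      ext ω
      simp only [Set.mem_inter_iff, Set.mem_ofPred]
      exact ⟨fun h => h.2, fun h => ⟨h ▸ hk, h⟩⟩
    · rw [← measureReal_empty (μ := P)]
      congr 1
      exact Set.eq_empty_of_forall_notMem fun ω ⟨h₁, h₂⟩ => hk (h₂ ▸ h₁)
  · intro k hk
    exact measureReal_mono_null Set.inter_subset_right (hs k hk)

variable {B : ℕ → Ω → ℕ} {r₀ : ℕ} {q : ℕ → ℕ → ℕ → ℝ} {j₀ : ℕ}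

lemma IsMC.measurableSet_eq (h : IsMC P q r₀ j₀ B) (s i : ℕ) : MeasurableSet {ω | B s ω = i} :=
  h.1 s (measurableSet_singleton i)

lemma measurableSet_history_eq (hB : ∀ s, Measurable (B s)) (m : ℕ) (g : Fin (m + 1) → ℕ) :
    MeasurableSet {ω | history B r₀ m ω = g} :=
  (measurable_pi_iff.2 fun i => hB (r₀ + i) : Measurable (history B r₀ m))
    (measurableSet_singleton g)

omit [MeasurableSpace Ω] in
lemma setOf_forall_eq_history (F : ℕ → ℕ) (m : ℕ) :
    {ω | ∀ s, r₀ ≤ s → s ≤ r₀ + m → B s ω = F s}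
      = {ω | history B r₀ m ω = fun i : Fin (m + 1) => F (r₀ + i)} := by
  ext ω
  simp only [Set.mem_ofPred, funext_iff, history]
  refine ⟨fun h i => h _ (by omega) (by omega), fun h s hs₁ hs₂ => ?_⟩
  simpa [Nat.add_sub_cancel' hs₁] using h ⟨s - r₀, by omega⟩

lemma IsMC.measureReal_history_snoc (h : IsMC P q r₀ j₀ B)
    (m : ℕ) (g : Fin (m + 1) → ℕ) (k : ℕ) :
    P.real {ω | history B r₀ (m + 1) ω = Fin.snoc g k}
      = P.real {ω | history B r₀ m ω = g} * q (r₀ + m) (g (Fin.last m)) k := by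
  set F : ℕ → ℕ := fun s =>
    if hs : s - r₀ < m + 2 then (Fin.snoc g k : Fin (m + 2) → ℕ) ⟨s - r₀, hs⟩ else 0
  have hF₁ : (fun i : Fin (m + 2) => F (r₀ + i)) = Fin.snoc g k := by
    funext i
    simp [F, i.isLt]
  have hF₀ : (fun i : Fin (m + 1) => F (r₀ + i)) = g := by
    funext i
    simp only [F, Nat.add_sub_cancel_left, dif_pos (show (i : ℕ) < m + 2 by omega)]
    exact Fin.snoc_castSucc (α := fun _ => ℕ) ..
  have hFm : F (r₀ + m) = g (Fin.last m) := congrFun hF₀ (Fin.last m)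
  have hFm₁ : F (r₀ + m + 1) = k := by
    simpa [add_assoc] using congrFun hF₁ (Fin.last (m + 1))
  have key := h.2.2 (r₀ + m) (Nat.le_add_right r₀ m) F
  rw [add_assoc, setOf_forall_eq_history, setOf_forall_eq_history, hF₁, hF₀, ← add_assoc, hFm,
    hFm₁] at key
  exact key

/-- `IsMC` only controls probabilities of whole paths, so the one-step law is obtained by
summing over the history up to time `r₀ + m`. -/
lemma IsMC.measureReal_inter_succ [IsFiniteMeasure P] (h : IsMC P q r₀ j₀ B) (m j k : ℕ) :
    P.real ({ω | B (r₀ + m) ω = j} ∩ {ω | B (r₀ + m + 1) ω = k})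
      = P.real {ω | B (r₀ + m) ω = j} * q (r₀ + m) j k := by
  rw [measureReal_eq_tsum_inter (measurableSet_history_eq h.1 m)
      ((h.measurableSet_eq _ j).inter (h.measurableSet_eq _ k)),
    measureReal_eq_tsum_inter (measurableSet_history_eq h.1 m) (h.measurableSet_eq _ j),
    ← tsum_mul_right]
  refine tsum_congr fun g => ?_
  by_cases hg : g (Fin.last m) = j
  · have h₁ : {ω | B (r₀ + m) ω = j} ∩ {ω | B (r₀ + m + 1) ω = k} ∩ {ω | history B r₀ m ω = g}
        = {ω | history B r₀ (m + 1) ω = Fin.snoc g k} := by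
      ext ω
      simp only [Set.mem_inter_iff, Set.mem_ofPred, history_succ, Fin.snoc_inj]
      constructor
      · rintro ⟨⟨-, hk⟩, hω⟩
        exact ⟨hω, hk⟩
      · rintro ⟨hω, hk⟩
        exact ⟨⟨(congrFun hω (Fin.last m)).trans hg, hk⟩, hω⟩
    have h₂ : {ω | B (r₀ + m) ω = j} ∩ {ω | history B r₀ m ω = g}
        = {ω | history B r₀ m ω = g} := by
      refine Set.inter_eq_right.2 fun ω hω => ?_
      exact (congrFun hω (Fin.last m)).trans hg
    rw [h₁, h₂, h.measureReal_history_snoc, hg]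
  · have hempty : ∀ S : Set Ω, {ω | B (r₀ + m) ω = j} ∩ S ∩ {ω | history B r₀ m ω = g} = ∅ :=
      fun S => Set.eq_empty_of_forall_notMem fun ω ⟨⟨hj, _⟩, hω⟩ =>
        hg ((congrFun hω (Fin.last m)).symm.trans hj)
    have h₂ := hempty Set.univ
    rw [Set.inter_univ] at h₂
    rw [hempty, h₂, measureReal_empty, zero_mul]

lemma IsMC.measureReal_succ [IsFiniteMeasure P] (h : IsMC P q r₀ j₀ B) (m k : ℕ) :
    P.real {ω | B (r₀ + m + 1) ω = k} = ∑' j, P.real {ω | B (r₀ + m) ω = j} * q (r₀ + m) j k := by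
  rw [measureReal_eq_tsum_inter (h.measurableSet_eq (r₀ + m)) (h.measurableSet_eq _ k)]
  exact tsum_congr fun j => by rw [Set.inter_comm, h.measureReal_inter_succ]

lemma IsMC.measureReal_start [IsProbabilityMeasure P] (h : IsMC P q r₀ j₀ B) (k : ℕ) :
    P.real {ω | B r₀ ω = k} = if k = j₀ then 1 else 0 := by
  split_ifs with hk
  · rw [measureReal_def, hk, h.2.1, ENNReal.toReal_one]
  · have hnull : P {ω | B r₀ ω = j₀}ᶜ = 0 :=
      (prob_compl_eq_zero_iff (h.1 r₀ (measurableSet_singleton j₀))).2 h.2.1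
    have hsub : {ω | B r₀ ω = k} ⊆ {ω | B r₀ ω = j₀}ᶜ := fun ω hω hj => hk (hω.symm.trans hj)
    rw [measureReal_def, measure_mono_null hsub hnull, ENNReal.toReal_zero]

lemma IsMC.measureReal_eq_marginal [IsProbabilityMeasure P] (h : IsMC P q r₀ j₀ B)
    (hq : IsPopulationKernel q r₀) (hj₀ : j₀ ≤ r₀) :
    ∀ m k, P.real {ω | B (r₀ + m) ω = k} = marginal q r₀ j₀ m k
  | 0, k => h.measureReal_start k
  | m + 1, k => by
    rw [← add_assoc, h.measureReal_succ, tsum_eq_sum (s := range (r₀ + m + 1))]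
    · simp only [h.measureReal_eq_marginal hq hj₀ m]
      rfl
    · intro j hj
      rw [h.measureReal_eq_marginal hq hj₀ m, marginal_eq_zero_of_lt hq hj₀ (by simpa using hj),
        zero_mul]

lemma IsMC.measureReal_setOf_eq_sum_marginal [IsProbabilityMeasure P] (h : IsMC P q r₀ j₀ B)
    (hq : IsPopulationKernel q r₀) (hj₀ : j₀ ≤ r₀) (m : ℕ) (p : ℕ → Prop) [DecidablePred p] :
    P.real {ω | p (B (r₀ + m) ω)} = ∑ k ∈ range (r₀ + m + 1) with p k, marginal q r₀ j₀ m k := by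
  rw [measureReal_setOf_eq_sum (h.1 _) (s := range (r₀ + m + 1)) (fun k hk => ?_) p]
  · exact sum_congr rfl fun k _ => h.measureReal_eq_marginal hq hj₀ m k
  · rw [h.measureReal_eq_marginal hq hj₀ m k, marginal_eq_zero_of_lt hq hj₀ (by simpa using hk)]

end Chain

/-! ### The Beta(r - 1, 1) limit -/

lemma integral_pow_mul_beta (s M : ℕ) :
    ∫ y in (0 : ℝ)..1, y ^ M * ((s + 1) * y ^ s)
      = (s + 1).ascFactorial M / (s + 2).ascFactorial M := by
  have hurn : ((s + 1 : ℕ) : ℝ) * (s + 2).ascFactorial M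
      = ((s + 1 : ℕ) + M) * (s + 1).ascFactorial M := by
    exact_mod_cast Nat.succ_ascFactorial (s + 1) M
  have hpos : (0 : ℝ) < (s + 2).ascFactorial M := by exact_mod_cast Nat.ascFactorial_pos (s + 1) M
  have hcongr : ∀ y : ℝ, y ^ M * ((s + 1) * y ^ s) = (s + 1) * y ^ (M + s) := fun y => by ring
  simp only [hcongr, intervalIntegral.integral_const_mul, integral_pow, one_pow,
    zero_pow (Nat.succ_ne_zero _), sub_zero]
  push_cast at hurn ⊢
  field_simp
  linarith

lemma integral_beta (s : ℕ) (c : ℝ) : ∫ y in (0 : ℝ)..c, ((s : ℝ) + 1) * y ^ s = c ^ (s + 1) := by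
  rw [intervalIntegral.integral_const_mul, integral_pow]
  field_simp
  ring

theorem tendsto_measureReal_lt_of_isNearPolyaKernel {Ω : Type*} [MeasurableSpace Ω]
    {P : Measure Ω} [IsProbabilityMeasure P] {q : ℕ → ℕ → ℕ → ℕ → ℝ} {ε : ℕ → ℝ} {r : ℕ}
    (hr : 2 ≤ r) (hq : ∀ n, IsNearPolyaKernel (q n) r (ε n))
    (hε : Tendsto (fun n : ℕ => ε n * (1 + Real.log n)) atTop (nhds 0))
    {B : ℕ → ℕ → Ω → ℕ} (hB : ∀ n, r ≤ n → IsMC P (q n) r 1 (B n)) {a : ℝ}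
    (ha : a ∈ Set.Ioo 0 1) :
    Tendsto (fun n : ℕ => (P {ω | a * n < (B n n ω : ℝ)}).toReal) atTop
      (nhds ((1 - a) ^ (r - 1))) := by
  obtain ⟨s, rfl⟩ : ∃ s, r = s + 2 := ⟨r - 2, by omega⟩
  set w : ℕ → ℕ → ℝ := fun n k => marginal (q n) (s + 2) 1 (n - (s + 2)) k
  set x : ℕ → ℕ → ℝ := fun n k => ((n : ℝ) - k) / n
  have hw : ∀ᶠ n in atTop, ∀ k ∈ range (n + 1), 0 ≤ w n k ∧ x n k ∈ Set.Icc 0 1 := by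
    filter_upwards [eventually_gt_atTop 0] with n hn k hk
    have hkn : (k : ℝ) ≤ n := by exact_mod_cast Nat.lt_succ_iff.1 (mem_range.1 hk)
    have hn' : (0 : ℝ) < n := by exact_mod_cast hn
    refine ⟨marginal_nonneg (hq n).toIsPopulationKernel _ k, div_nonneg (by linarith) hn'.le, ?_⟩
    rw [div_le_one hn']
    linarith [(Nat.cast_nonneg k : (0 : ℝ) ≤ k)]
  have hw₁ : ∀ᶠ n in atTop, ∑ k ∈ range (n + 1), w n k = 1 := by
    filter_upwards [eventually_ge_atTop (s + 2)] with n hn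
    simpa [w, Nat.add_sub_cancel' hn] using
      sum_marginal (hq n).toIsPopulationKernel (by omega) (n - (s + 2))
  have hmom : ∀ M : ℕ, Tendsto (fun n => ∑ k ∈ range (n + 1), w n k * x n k ^ M) atTop
      (nhds (∫ y in (0 : ℝ)..1, y ^ M * ((s + 1) * y ^ s))) := fun M => by
    have h := tendsto_sum_marginal_mul_pow hq hε (j₀ := 1) (by omega) (by omega) M
    rwa [show s + 2 - 1 = s + 1 by omega, ← integral_pow_mul_beta] at h
  have hcdf := tendsto_sum_filter_lt_of_moments (by fun_prop) (fun y hy => by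
    have := hy.1; positivity) hw hw₁ hmom (c := 1 - a) ⟨by linarith [ha.2], by linarith [ha.1]⟩
  rw [integral_beta] at hcdf
  rw [show s + 2 - 1 = s + 1 by omega]
  refine hcdf.congr' ?_
  filter_upwards [eventually_ge_atTop (s + 2)] with n hn
  obtain ⟨m, rfl⟩ := Nat.exists_eq_add_of_le hn
  have hn' : (0 : ℝ) < (s + 2 + m : ℕ) := by positivity
  rw [← measureReal_def, (hB _ hn).measureReal_setOf_eq_sum_marginal
    (hq _).toIsPopulationKernel (by omega) m (fun k : ℕ => a * (s + 2 + m : ℕ) < (k : ℝ))]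
  refine sum_congr (filter_congr fun k _ => ?_) fun k _ => by simp [w]
  rw [div_lt_iff₀ hn']
  constructor <;> intro h <;> linarith

theorem conditional_mutation_frequency_general
    (r : ℕ) (hr : 2 ≤ r) (a : ℝ) (ha : a ∈ Set.Ioo (0 : ℝ) 1)
    (θ : ℝ) (μ : ℕ → ℝ) (hμ : ∀ n, μ n ∈ Set.Ioo (0 : ℝ) 1)
    (hlim : Tendsto (fun n : ℕ => (n : ℝ) * μ n) atTop (nhds θ))
    (Ω : Type) [MeasurableSpace Ω] (P : Measure Ω) [IsProbabilityMeasure P]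
    (B Bhat : ℕ → ℕ → Ω → ℕ)
    (hB : ∀ n, r ≤ n → IsMC P (singleSiteTrans (μ n)) r 1 (B n))
    (hBhat : ∀ n, r ≤ n → IsMC P (hatTrans (μ n)) r 1 (Bhat n)) :
    Tendsto (fun n : ℕ => (P {ω | a * n < (B n n ω : ℝ)}).toReal) atTop
      (nhds ((1 - a) ^ (r - 1)))
    ∧ Tendsto (fun n : ℕ => (P {ω | a * n < (Bhat n n ω : ℝ)}).toReal) atTop
      (nhds ((1 - a) ^ (r - 1))) := by
  have hμ' : ∀ n, μ n ∈ Set.Icc 0 1 := fun n => Set.Ioo_subset_Icc_self (hμ n)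
  have hε := tendsto_mul_one_add_log_of_tendsto_mul hlim
  exact ⟨tendsto_measureReal_lt_of_isNearPolyaKernel hr
      (fun n => isNearPolyaKernel_singleSiteTrans (hμ' n) (by omega)) hε hB ha,
    tendsto_measureReal_lt_of_isNearPolyaKernel hr
      (fun n => isNearPolyaKernel_hatTrans (hμ' n) (by omega)) hε hBhat ha⟩

/-- Fix `r ≥ 2` and `a ∈ (0,1)`, let `θ ∈ [0,∞)` and `(μ_n) ⊂ (0,1)`
with `n·μ_n → θ`.  For each `n ≥ r`, let `(B^{(n)}_s)_{s ≥ r}` be the single-site mutation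
chain with mutation rate `μ_n` started from `B^{(n)}_r = 1` at population size `r`, and
let `(B̂^{(n)}_s)_{s ≥ r}` be the mutant-descendant chain with mutation rate `μ_n` started
from `B̂^{(n)}_r = 1`.  Then `P[B^{(n)}_n > a·n] → (1−a)^{r−1}` and
`P[B̂^{(n)}_n > a·n] → (1−a)^{r−1}`. -/
theorem conditional_mutation_frequency
    (r : ℕ) (hr : 2 ≤ r) (a : ℝ) (ha : a ∈ Set.Ioo (0 : ℝ) 1)
    (θ : ℝ) (hθ : 0 ≤ θ) (μ : ℕ → ℝ) (hμ : ∀ n, μ n ∈ Set.Ioo (0 : ℝ) 1)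
    (hlim : Tendsto (fun n : ℕ => (n : ℝ) * μ n) atTop (nhds θ))
    (Ω : Type) [MeasurableSpace Ω] (P : Measure Ω) [IsProbabilityMeasure P]
    (B Bhat : ℕ → ℕ → Ω → ℕ)
    (hB : ∀ n, r ≤ n → IsMC P (singleSiteTrans (μ n)) r 1 (B n))
    (hBhat : ∀ n, r ≤ n → IsMC P (hatTrans (μ n)) r 1 (Bhat n)) :
    Tendsto (fun n : ℕ => (P {ω | a * n < (B n n ω : ℝ)}).toReal) atTop
      (nhds ((1 - a) ^ (r - 1)))
    ∧ Tendsto (fun n : ℕ => (P {ω | a * n < (Bhat n n ω : ℝ)}).toReal) atTop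
      (nhds ((1 - a) ^ (r - 1))) :=
  conditional_mutation_frequency_general r hr a ha θ μ hμ hlim Ω P B Bhat hB hBhat
end

section
/- Let p ∈ (1/2, 1] and let (p_n)_{n≥1} ⊂ (0,1) satisfy p_n → p. For each n let (R^n_j)_{j≥1} be i.i.d. random variables with P[R^n_j = 1] = p_n and P[R^n_j = −1] = 1 − p_n, let the random walk start at 1, let ρ_n = min{k ≥ 1 : 1 + Σ_{j=1}^k R^n_j ∈ {0, n}}, and let D_n = Σ_{j=1}^{ρ_n} 1_{{R^n_j = −1}} be the number of downsteps before the walk hits {0,n}. Then there exists c > 0 such that P[D_n > n^{3/2}] ≤ c·n^{−3/2} for all sufficiently large n; consequently, if the walks for all n are defined on a common probability space, then almost surely D_n ≤ n^{3/2} for all but finitely many n. -/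
/-!
Let `m = ⌈n^{3/2}⌉`. If the walk makes more than `n^{3/2}` downsteps before hitting `{0, n}`,
then `S_m = Σ_{j ≤ m} R_j ≤ n`: either those downsteps all happen by time `m`, and then
`S_m = m - 2 D_m < 1`, or the walk is still inside `(0, n)` at time `m`. But `S_m` has mean
`m (2 p_n - 1) ≥ m (p - 1/2)`, much larger than `n`, and variance at most `m`, so Chebyshev's
inequality bounds the probability by `O(1/m) = O(n^{-3/2})`. This is summable, and Borel–Cantelli
gives the almost sure statement.
-/

open MeasureTheory ProbabilityTheory Filter Set

/-- `manyDownsteps R n t ω` says that the random walk `k ↦ 1 + Σ_{j=1}^k R_j(ω)` makes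
more than `t` downsteps (steps with `R_j = −1`) before first hitting the set `{0, n}`:
there is a time `k`, not later than the hitting time, by which more than `t` downsteps
have occurred. -/
def manyDownsteps {Ω : Type*} (R : ℕ → Ω → ℤ) (n : ℕ) (t : ℝ) (ω : Ω) : Prop :=
  ∃ k : ℕ,
    (∀ k' < k, (1 + ∑ j ∈ Finset.Icc 1 k', R j ω) ≠ 0 ∧
      (1 + ∑ j ∈ Finset.Icc 1 k', R j ω) ≠ (n : ℤ)) ∧
    t < (((Finset.Icc 1 k).filter (fun j => R j ω = -1)).card : ℝ)

open scoped Finset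

theorem sum_eq_card_sub_two_mul_card_filter {ι : Type*} (s : Finset ι) (f : ι → ℤ)
    (hf : ∀ j ∈ s, f j = 1 ∨ f j = -1) :
    ∑ j ∈ s, f j = #s - 2 * #{j ∈ s | f j = -1} := by
  calc ∑ j ∈ s, f j = ∑ j ∈ s, (1 - 2 * if f j = -1 then 1 else 0) :=
        Finset.sum_congr rfl fun j hj => by rcases hf j hj with h | h <;> simp [h]
    _ = #s - 2 * #{j ∈ s | f j = -1} := by
        simp only [Finset.sum_sub_distrib, ← Finset.mul_sum, Finset.sum_boole, Finset.sum_const,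
          nsmul_eq_mul, mul_one]

theorem mem_Ioo_of_forall_ne_of_abs_sub_le_one {s : ℕ → ℤ} {a b : ℤ}
    (hstep : ∀ i, |s (i + 1) - s i| ≤ 1) (h0 : s 0 ∈ Ioo a b) {k : ℕ}
    (hne : ∀ i < k, s i ≠ a ∧ s i ≠ b) : ∀ i < k, s i ∈ Ioo a b := by
  intro i
  induction i with
  | zero => exact fun _ => h0
  | succ i ih =>
    intro hi
    have hprev := ih (by omega)
    have hcur := hne (i + 1) hi
    have hs := abs_le.mp (hstep i)
    simp only [mem_Ioo] at hprev ⊢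
    omega

theorem sum_Icc_ceil_le_of_manyDownsteps {Ω : Type*} {R : ℕ → Ω → ℤ} {n : ℕ} {t : ℝ}
    {ω : Ω} (hval : ∀ j, 1 ≤ j → R j ω = 1 ∨ R j ω = -1) (hn : 0 < n) (ht : 0 ≤ t)
    (h : manyDownsteps R n t ω) : ∑ j ∈ Finset.Icc 1 ⌈t⌉₊, (R j ω : ℝ) ≤ n := by
  obtain ⟨k, hk, hdown⟩ := h
  set m := ⌈t⌉₊
  suffices ∑ j ∈ Finset.Icc 1 m, R j ω ≤ n by exact_mod_cast this
  rcases le_or_gt k m with hkm | hmk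
  · have hcard : t < #{j ∈ Finset.Icc 1 m | R j ω = -1} :=
      hdown.trans_le <| by
        exact_mod_cast Finset.card_le_card <|
          Finset.filter_subset_filter _ (Finset.Icc_subset_Icc_right hkm)
    have hm : (m : ℝ) < t + 1 := Nat.ceil_lt_add_one ht
    rw [sum_eq_card_sub_two_mul_card_filter _ _ fun j hj => hval j (Finset.mem_Icc.mp hj).1,
      Nat.card_Icc, Nat.add_sub_cancel]
    have : ((m - 2 * #{j ∈ Finset.Icc 1 m | R j ω = -1} : ℤ) : ℝ) < 1 := by
      push_cast
      linarith
    have : (m - 2 * #{j ∈ Finset.Icc 1 m | R j ω = -1} : ℤ) < 1 := by exact_mod_cast this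
    omega
  · have hstep : ∀ i, |(1 + ∑ j ∈ Finset.Icc 1 (i + 1), R j ω)
        - (1 + ∑ j ∈ Finset.Icc 1 i, R j ω)| ≤ 1 := by
      intro i
      rw [Finset.sum_Icc_succ_top (by omega)]
      rcases hval (i + 1) (by omega) with h | h <;> rw [h] <;> norm_num
    have h0 : 1 + ∑ j ∈ Finset.Icc 1 0, R j ω ∈ Ioo 0 (n : ℤ) := by
      have := (hk 0 (by omega)).2
      simp only [zero_lt_one, Finset.Icc_eq_empty_of_lt, Finset.sum_empty, add_zero, mem_Ioo,
        true_and] at this ⊢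
      omega
    have := mem_Ioo_of_forall_ne_of_abs_sub_le_one
      (s := fun i => 1 + ∑ j ∈ Finset.Icc 1 i, R j ω) hstep h0 hk m hmk
    simp only [mem_Ioo] at this
    omega

section RandomWalk

variable {Ω : Type*} [MeasurableSpace Ω] {P : Measure Ω} [IsProbabilityMeasure P]

theorem integral_intCast_eq_of_pm_one {Z : Ω → ℤ} (hZ : Measurable Z)
    (hval : ∀ ω, Z ω = 1 ∨ Z ω = -1) :
    ∫ ω, (Z ω : ℝ) ∂P = 2 * P.real {ω | Z ω = 1} - 1 := by
  have hup : MeasurableSet {ω | Z ω = 1} := hZ (measurableSet_singleton 1)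
  have hZ_eq : (fun ω => (Z ω : ℝ))
      = fun ω => 2 * {ω | Z ω = 1}.indicator (fun _ => 1) ω - 1 := by
    funext ω
    rcases hval ω with h | h <;> norm_num [h, Set.indicator]
  rw [hZ_eq, integral_sub (((integrable_const (1 : ℝ)).indicator hup).const_mul 2)
    (integrable_const 1), integral_const_mul, integral_indicator_const _ hup, integral_const,
    probReal_univ, smul_eq_mul, smul_eq_mul, mul_one, one_mul]

theorem measure_sum_le_le_of_pm_one {ι : Type*} {Z : ι → Ω → ℤ} {s : Finset ι} {q x : ℝ}
    (hmeas : ∀ j ∈ s, Measurable (Z j)) (hval : ∀ j ∈ s, ∀ ω, Z j ω = 1 ∨ Z j ω = -1)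
    (hlaw : ∀ j ∈ s, P {ω | Z j ω = 1} = ENNReal.ofReal q) (hq : 0 ≤ q)
    (hindep : (s : Set ι).Pairwise fun i j => IndepFun (Z i) (Z j) P)
    (hx : x < #s * (2 * q - 1)) :
    P {ω | ∑ j ∈ s, (Z j ω : ℝ) ≤ x}
      ≤ ENNReal.ofReal (#s / (#s * (2 * q - 1) - x) ^ 2) := by
  set Y : ι → Ω → ℝ := fun j ω => Z j ω
  have hYmeas : ∀ j ∈ s, Measurable (Y j) := fun j hj => measurable_from_top.comp (hmeas j hj)
  have hYbound : ∀ j ∈ s, ∀ ω, Y j ω ∈ Icc (-1) 1 := fun j hj ω => by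
    rcases hval j hj ω with h | h <;> simp [Y, h]
  have hYLp : ∀ j ∈ s, MemLp (Y j) 2 P := fun j hj =>
    MemLp.of_bound (hYmeas j hj).aestronglyMeasurable 1 <| .of_forall fun ω => by
      simpa [Real.norm_eq_abs, abs_le] using hYbound j hj ω
  have hmean : ∫ ω, ∑ j ∈ s, Y j ω ∂P = #s * (2 * q - 1) := by
    rw [integral_finsetSum _ fun j hj => (hYLp j hj).integrable one_le_two]
    rw [Finset.sum_congr rfl fun j hj => by
      rw [integral_intCast_eq_of_pm_one (hmeas j hj) (hval j hj), measureReal_def, hlaw j hj,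
        ENNReal.toReal_ofReal hq]]
    rw [Finset.sum_const, nsmul_eq_mul]
  have hvar : variance (∑ j ∈ s, Y j) P ≤ #s := by
    rw [IndepFun.variance_sum hYLp fun i hi j hj hij =>
      (hindep hi hj hij).comp measurable_from_top measurable_from_top]
    calc ∑ j ∈ s, variance (Y j) P ≤ ∑ j ∈ s, ((1 - -1) / 2 : ℝ) ^ 2 :=
          Finset.sum_le_sum fun j hj =>
            variance_le_sq_of_bounded (.of_forall (hYbound j hj)) (hYmeas j hj).aemeasurable
      _ = #s := by norm_num
  have hdev : 0 < #s * (2 * q - 1) - x := by linarith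
  calc P {ω | ∑ j ∈ s, Y j ω ≤ x}
      ≤ P {ω | #s * (2 * q - 1) - x
          ≤ |(∑ j ∈ s, Y j) ω - ∫ ω', (∑ j ∈ s, Y j) ω' ∂P|} := by
        refine measure_mono fun ω hω => ?_
        simp only [Finset.sum_apply, mem_ofPred_eq] at hω ⊢
        rw [hmean]
        exact (by linarith : _ ≤ -(∑ j ∈ s, Y j ω - #s * (2 * q - 1))).trans (neg_le_abs _)
    _ ≤ ENNReal.ofReal (variance (∑ j ∈ s, Y j) P / (#s * (2 * q - 1) - x) ^ 2) :=
        meas_ge_le_variance_div_sq (memLp_finsetSum' s hYLp) hdev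
    _ ≤ ENNReal.ofReal (#s / (#s * (2 * q - 1) - x) ^ 2) := by gcongr

theorem measure_manyDownsteps_le {R : ℕ → Ω → ℤ} {n : ℕ} {q ε t : ℝ}
    (hmeas : ∀ j, 1 ≤ j → Measurable (R j))
    (hval : ∀ j ω, 1 ≤ j → R j ω = 1 ∨ R j ω = -1)
    (hlaw : ∀ j, 1 ≤ j → P {ω | R j ω = 1} = ENNReal.ofReal q)
    (hindep : iIndepFun (fun j : {j : ℕ // 1 ≤ j} => R j) P)
    (hε : 0 < ε) (hq : ε ≤ 2 * q - 1) (hn : 0 < n) (hnt : 2 * n ≤ ε * t) :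
    P {ω | manyDownsteps R n t ω} ≤ ENNReal.ofReal (4 / (ε ^ 2 * t)) := by
  have ht : 0 < t := by
    have : (0 : ℝ) < n := Nat.cast_pos.2 hn
    nlinarith
  set m := ⌈t⌉₊
  have htm : t ≤ m := Nat.le_ceil t
  have hm : (0 : ℝ) < m := ht.trans_le htm
  have hdev : ε * m / 2 ≤ m * (2 * q - 1) - n := by nlinarith
  have hpair : (Finset.Icc 1 m : Set ℕ).Pairwise fun i j => IndepFun (R i) (R j) P :=
    fun i hi j hj hij => hindep.indepFun (i := ⟨i, (Finset.mem_Icc.mp hi).1⟩)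
      (j := ⟨j, (Finset.mem_Icc.mp hj).1⟩) fun h => hij (congrArg Subtype.val h)
  have hsum := measure_sum_le_le_of_pm_one (P := P) (s := Finset.Icc 1 m) (x := n)
    (fun j hj => hmeas j (Finset.mem_Icc.mp hj).1)
    (fun j hj ω => hval j ω (Finset.mem_Icc.mp hj).1)
    (fun j hj => hlaw j (Finset.mem_Icc.mp hj).1) (by linarith) hpair
  rw [Nat.card_Icc, Nat.add_sub_cancel] at hsum
  calc P {ω | manyDownsteps R n t ω}
      ≤ P {ω | ∑ j ∈ Finset.Icc 1 m, (R j ω : ℝ) ≤ n} :=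
        measure_mono fun ω hω => sum_Icc_ceil_le_of_manyDownsteps (hval · ω) hn ht.le hω
    _ ≤ ENNReal.ofReal (m / (m * (2 * q - 1) - n) ^ 2) := hsum (by nlinarith)
    _ ≤ ENNReal.ofReal (4 / (ε ^ 2 * t)) := by
        refine ENNReal.ofReal_le_ofReal ?_
        calc (m : ℝ) / (m * (2 * q - 1) - n) ^ 2 ≤ m / (ε * m / 2) ^ 2 := by gcongr
          _ = 4 / (ε ^ 2 * m) := by field_simp; ring
          _ ≤ 4 / (ε ^ 2 * t) := by gcongr

end RandomWalk

theorem ae_eventually_notMem_of_summable_toReal {α : Type*} [MeasurableSpace α]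
    {μ : Measure α} [IsFiniteMeasure μ] {s : ℕ → Set α}
    (hs : Summable fun n => (μ (s n)).toReal) : ∀ᵐ x ∂μ, ∀ᶠ n in atTop, x ∉ s n := by
  refine ae_eventually_notMem ?_
  rw [tsum_congr fun n => (ENNReal.ofReal_toReal (measure_ne_top μ (s n))).symm,
    ← ENNReal.ofReal_tsum_of_nonneg (fun _ => ENNReal.toReal_nonneg) hs]
  exact ENNReal.ofReal_ne_top

theorem downstep_count_bound_general
    (p : ℝ) (hp : p ∈ Set.Ioc (1 / 2 : ℝ) 1)
    (pn : ℕ → ℝ)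
    (hlim : Tendsto pn atTop (nhds p))
    (Ω : Type) [MeasurableSpace Ω] (P : Measure Ω) [IsProbabilityMeasure P]
    (R : ℕ → ℕ → Ω → ℤ)
    (hmeas : ∀ n j, 1 ≤ j → Measurable (R n j))
    (hval : ∀ n j ω, 1 ≤ j → (R n j ω = 1 ∨ R n j ω = -1))
    (hlaw : ∀ n j, 1 ≤ j → P {ω | R n j ω = 1} = ENNReal.ofReal (pn n))
    (hIndep : ∀ n, iIndepFun
      (fun j : {j : ℕ // 1 ≤ j} => R n j) P) :
    (∃ c : ℝ, 0 < c ∧ ∀ᶠ n : ℕ in atTop,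
        (P {ω | manyDownsteps (R n) n ((n : ℝ) ^ ((3 : ℝ) / 2)) ω}).toReal
          ≤ c * (n : ℝ) ^ (-(3 : ℝ) / 2))
    ∧ ∀ᵐ ω ∂P, ∀ᶠ n : ℕ in atTop,
        ¬ manyDownsteps (R n) n ((n : ℝ) ^ ((3 : ℝ) / 2)) ω := by
  set ε := p - 1 / 2 with hε_def
  have hε : 0 < ε := by linarith [hp.1]
  have hdrift : ∀ᶠ n in atTop, ε ≤ 2 * pn n - 1 :=
    (hlim.eventually (eventually_ge_nhds (by linarith [hp.1] : p / 2 + 1 / 4 < p))).mono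
      fun n hn => by linarith
  have hgrowth : ∀ᶠ n : ℕ in atTop, 2 * (n : ℝ) ≤ ε * (n : ℝ) ^ ((3 : ℝ) / 2) := by
    filter_upwards [((tendsto_rpow_atTop (by norm_num : (0 : ℝ) < 1 / 2)).comp
      tendsto_natCast_atTop_atTop).eventually_ge_atTop (2 / ε)] with n hn
    rw [show (3 : ℝ) / 2 = 1 + 1 / 2 by norm_num,
      Real.rpow_add' (Nat.cast_nonneg n) (by norm_num), Real.rpow_one]
    have hsqrt : 2 ≤ ε * (n : ℝ) ^ (1 / 2 : ℝ) := (div_le_iff₀' hε).1 hn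
    nlinarith [mul_le_mul_of_nonneg_left hsqrt (Nat.cast_nonneg (α := ℝ) n)]
  have hbound : ∀ᶠ n : ℕ in atTop,
      (P {ω | manyDownsteps (R n) n ((n : ℝ) ^ ((3 : ℝ) / 2)) ω}).toReal
        ≤ 4 / ε ^ 2 * (n : ℝ) ^ (-(3 : ℝ) / 2) := by
    filter_upwards [hdrift, hgrowth, eventually_gt_atTop 0] with n hq hnt hn
    refine ENNReal.toReal_le_of_le_ofReal (by positivity) ((measure_manyDownsteps_le (hmeas n)
      (hval n) (hlaw n) (hIndep n) hε hq hn hnt).trans_eq ?_)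
    rw [neg_div, Real.rpow_neg (Nat.cast_nonneg n), ← div_div, div_eq_mul_inv]
  refine ⟨⟨4 / ε ^ 2, by positivity, hbound⟩, ae_eventually_notMem_of_summable_toReal ?_⟩
  refine .of_norm_bounded_eventually_nat
    ((Real.summable_nat_rpow.2 (by norm_num : -(3 : ℝ) / 2 < -1)).mul_left (4 / ε ^ 2))
    (hbound.mono fun n hn => ?_)
  rwa [Real.norm_of_nonneg ENNReal.toReal_nonneg]

/-- Let `p ∈ (1/2, 1]` and `(p_n) ⊂ (0,1)` with `p_n → p`.  For each
`n` let `(R^n_j)_{j ≥ 1}` be i.i.d. `±1`-valued random variables with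
`P[R^n_j = 1] = p_n`, let the walk start at `1`, let `ρ_n` be the first hitting time of
`{0, n}`, and let `D_n` be the number of downsteps before the walk hits `{0,n}`.  Then
there is `c > 0` with `P[D_n > n^{3/2}] ≤ c·n^{−3/2}` for all sufficiently large `n`;
consequently, on a common probability space, almost surely `D_n ≤ n^{3/2}` for all but
finitely many `n`. -/
theorem downstep_count_bound
    (p : ℝ) (hp : p ∈ Set.Ioc (1 / 2 : ℝ) 1)
    (pn : ℕ → ℝ) (hpn : ∀ n, pn n ∈ Set.Ioo (0 : ℝ) 1)
    (hlim : Tendsto pn atTop (nhds p))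
    (Ω : Type) [MeasurableSpace Ω] (P : Measure Ω) [IsProbabilityMeasure P]
    (R : ℕ → ℕ → Ω → ℤ)
    (hmeas : ∀ n j, 1 ≤ j → Measurable (R n j))
    (hval : ∀ n j ω, 1 ≤ j → (R n j ω = 1 ∨ R n j ω = -1))
    (hlaw : ∀ n j, 1 ≤ j → P {ω | R n j ω = 1} = ENNReal.ofReal (pn n))
    (hIndep : ∀ n, iIndepFun
      (fun j : {j : ℕ // 1 ≤ j} => R n j) P) :
    (∃ c : ℝ, 0 < c ∧ ∀ᶠ n : ℕ in atTop,
        (P {ω | manyDownsteps (R n) n ((n : ℝ) ^ ((3 : ℝ) / 2)) ω}).toReal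
          ≤ c * (n : ℝ) ^ (-(3 : ℝ) / 2))
    ∧ ∀ᵐ ω ∂P, ∀ᶠ n : ℕ in atTop,
        ¬ manyDownsteps (R n) n ((n : ℝ) ^ ((3 : ℝ) / 2)) ω :=
  downstep_count_bound_general p hp pn hlim Ω P R hmeas hval hlaw hIndep
end
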